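/- arXiv:1308.0579 — 11 statements merged into one kernel-verified Lean document; each statement's English description precedes it below -/
import Mathlib

section
/- Let R be an associative unital algebra over a field k, let a, b ∈ k, set α = a + b and β = −ab, and let d, u ∈ R. With Ω₁ = du − a·ud, the pair of down-up relations d²u = α·dud + β·ud² and du² = α·udu + β·u²d holds if and only if the pair of relations d·Ω₁ = b·Ω₁·d and Ω₁·u = b·u·Ω₁ holds. -/
/-!
Expanding `Ω₁ = du - a·ud` shows that `dΩ₁ - b·Ω₁d` is exactly `d²u - α·dud - β·ud²`, so the first
down-up relation and the first `Ω₁`-relation say the same thing. The second pair is the first pair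
read in the opposite ring with `d` and `u` exchanged.
-/

open MulOpposite

section DownUp

variable {k R : Type*} [CommRing k] [Ring R] [Algebra k R]

theorem downUp_sub_eq_omega_sub (a b : k) (d u : R) :
    d ^ 2 * u - ((a + b) • (d * u * d) + (-(a * b)) • (u * d ^ 2)) =
      d * (d * u - a • (u * d)) - b • ((d * u - a • (u * d)) * d) := by
  simp only [pow_two, mul_sub, sub_mul, mul_smul_comm, smul_mul_assoc, mul_assoc]
  module

theorem downUp_left_iff_omega (a b : k) (d u : R) :
    d ^ 2 * u = (a + b) • (d * u * d) + (-(a * b)) • (u * d ^ 2) ↔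
      d * (d * u - a • (u * d)) = b • ((d * u - a • (u * d)) * d) := by
  rw [← sub_eq_zero, downUp_sub_eq_omega_sub, sub_eq_zero]

theorem downUp_right_iff_omega (a b : k) (d u : R) :
    d * u ^ 2 = (a + b) • (u * d * u) + (-(a * b)) • (u ^ 2 * d) ↔
      (d * u - a • (u * d)) * u = b • (u * (d * u - a • (u * d))) := by
  simpa only [op_inj, ← op_mul, ← op_pow, ← op_smul, ← op_sub, ← op_add, ← op_neg, mul_assoc]
    using downUp_left_iff_omega a b (op u) (op d)

end DownUp

/-- Lemma 7.1 (last assertion): for a down-up algebra situation, the pair of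
down-up relations is equivalent to the pair of relations expressing that
`Ω₁ = du - a•ud` is normal with `d·Ω₁ = b·Ω₁·d` and `Ω₁·u = b·u·Ω₁`. -/
theorem downUp_relations_iff_omega_relations
    {k : Type*} [Field k] {R : Type*} [Ring R] [Algebra k R]
    (a b : k) (d u : R) :
    (d ^ 2 * u = (a + b) • (d * u * d) + (-(a * b)) • (u * d ^ 2) ∧
      d * u ^ 2 = (a + b) • (u * d * u) + (-(a * b)) • (u ^ 2 * d)) ↔
    (d * (d * u - a • (u * d)) = b • ((d * u - a • (u * d)) * d) ∧
      (d * u - a • (u * d)) * u = b • (u * (d * u - a • (u * d)))) :=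
  and_congr (downUp_left_iff_omega a b d u) (downUp_right_iff_omega a b d u)
end

section
/- Let R be an associative unital algebra over a field k, let a, b ∈ k be nonzero, set α = a + b and β = −ab, and suppose d, u ∈ R satisfy the down-up relations d²u = α·dud + β·ud² and du² = α·udu + β·u²d. With Ω₁ = du − a·ud and Ω₂ = du − b·ud, the following identities hold in R: d·Ω₁ = b·Ω₁·d, Ω₁·u = b·u·Ω₁, d·Ω₂ = a·Ω₂·d, Ω₂·u = a·u·Ω₂, (ud)·Ωᵢ = Ωᵢ·(ud) and (du)·Ωᵢ = Ωᵢ·(du) for i = 1, 2, and Ω₁·Ω₂ = Ω₂·Ω₁. -/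
/-!
Write `Ω = du - a•ud`. The first down-up relation says exactly that
`dΩ = d²u - a•dud = b•(dud - a•ud²) = b•Ωd`, and the second one, read the same way,
that `Ωu = b•uΩ`. The two twisting factors `b` cancel when `Ω` is moved past `ud`, so `Ω`
commutes with `ud`, hence with `du = Ω + a•ud`, and hence with every combination of `du`
and `ud`, in particular with `du - b•ud`. Since the relations are symmetric in `a` and `b`,
everything also holds with `a` and `b` exchanged.
-/

section DownUp

variable {k R : Type*} [CommRing k] [Ring R] [Algebra k R]

theorem mul_eq_smul_mul_of_down_relation {a b : k} {d u Ω : R}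
    (hΩ : Ω = d * u - a • (u * d))
    (h : d ^ 2 * u = (a + b) • (d * u * d) + (-(a * b)) • (u * d ^ 2)) :
    d * Ω = b • (Ω * d) :=
  calc d * Ω = d ^ 2 * u - a • (d * u * d) := by
        rw [hΩ, mul_sub, mul_smul_comm, sq, mul_assoc, mul_assoc]
    _ = b • (d * u * d) - (a * b) • (u * d ^ 2) := by rw [h]; module
    _ = b • (Ω * d) := by
        rw [hΩ, sub_mul, smul_mul_assoc, mul_assoc u, ← sq, smul_sub, smul_smul, mul_comm b]

theorem mul_eq_smul_mul_of_up_relation {a b : k} {d u Ω : R}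
    (hΩ : Ω = d * u - a • (u * d))
    (h : d * u ^ 2 = (a + b) • (u * d * u) + (-(a * b)) • (u ^ 2 * d)) :
    Ω * u = b • (u * Ω) :=
  calc Ω * u = d * u ^ 2 - a • (u * d * u) := by
        rw [hΩ, sub_mul, smul_mul_assoc, sq, mul_assoc]
    _ = b • (u * d * u) - (a * b) • (u ^ 2 * d) := by rw [h]; module
    _ = b • (u * Ω) := by
        rw [hΩ, mul_sub, mul_smul_comm, ← mul_assoc, ← mul_assoc, ← sq, smul_sub, smul_smul,
          mul_comm b]

theorem commute_mul_of_mul_eq_smul_mul {b : k} {d u Ω : R}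
    (hd : d * Ω = b • (Ω * d)) (hu : Ω * u = b • (u * Ω)) : Commute (u * d) Ω :=
  calc u * d * Ω = (b • (u * Ω)) * d := by
        rw [mul_assoc, hd, mul_smul_comm, smul_mul_assoc, mul_assoc]
    _ = Ω * (u * d) := by rw [← hu, mul_assoc]

theorem commute_mul_of_commute_mul_swap {a : k} {d u Ω : R}
    (hΩ : Ω = d * u - a • (u * d)) (h : Commute (u * d) Ω) : Commute (d * u) Ω := by
  rw [sub_eq_iff_eq_add.mp hΩ.symm]
  exact (Commute.refl Ω).add_left (h.smul_left a)

end DownUp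

theorem downUp_omega_identities_general
    {k : Type*} [Field k] {R : Type*} [Ring R] [Algebra k R]
    (a b : k) (d u Ω₁ Ω₂ : R)
    (hΩ₁ : Ω₁ = d * u - a • (u * d)) (hΩ₂ : Ω₂ = d * u - b • (u * d))
    (h1 : d ^ 2 * u = (a + b) • (d * u * d) + (-(a * b)) • (u * d ^ 2))
    (h2 : d * u ^ 2 = (a + b) • (u * d * u) + (-(a * b)) • (u ^ 2 * d)) :
    d * Ω₁ = b • (Ω₁ * d) ∧
    Ω₁ * u = b • (u * Ω₁) ∧
    d * Ω₂ = a • (Ω₂ * d) ∧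
    Ω₂ * u = a • (u * Ω₂) ∧
    (u * d) * Ω₁ = Ω₁ * (u * d) ∧
    (u * d) * Ω₂ = Ω₂ * (u * d) ∧
    (d * u) * Ω₁ = Ω₁ * (d * u) ∧
    (d * u) * Ω₂ = Ω₂ * (d * u) ∧
    Ω₁ * Ω₂ = Ω₂ * Ω₁ := by
  have h1' := h1
  have h2' := h2
  rw [add_comm a b, mul_comm a b] at h1' h2'
  have hd₁ := mul_eq_smul_mul_of_down_relation hΩ₁ h1
  have hu₁ := mul_eq_smul_mul_of_up_relation hΩ₁ h2
  have hd₂ := mul_eq_smul_mul_of_down_relation hΩ₂ h1'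
  have hu₂ := mul_eq_smul_mul_of_up_relation hΩ₂ h2'
  have hud₁ := commute_mul_of_mul_eq_smul_mul hd₁ hu₁
  have hud₂ := commute_mul_of_mul_eq_smul_mul hd₂ hu₂
  have hdu₁ := commute_mul_of_commute_mul_swap hΩ₁ hud₁
  have hdu₂ := commute_mul_of_commute_mul_swap hΩ₂ hud₂
  have hΩ₁₂ : Commute Ω₁ Ω₂ := hΩ₂ ▸ hdu₁.symm.sub_right (hud₁.symm.smul_right b)
  exact ⟨hd₁, hu₁, hd₂, hu₂, hud₁, hud₂, hdu₁, hdu₂, hΩ₁₂⟩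

/-- Lemma 7.1: if `d, u` satisfy the down-up relations with parameters
`α = a + b`, `β = -ab` (`a, b ≠ 0`), then `Ω₁ = du - a•ud` and `Ω₂ = du - b•ud`
are normal-type elements satisfying the listed commutation identities. -/
theorem downUp_omega_identities
    {k : Type*} [Field k] {R : Type*} [Ring R] [Algebra k R]
    (a b : k) (ha : a ≠ 0) (hb : b ≠ 0) (d u Ω₁ Ω₂ : R)
    (hΩ₁ : Ω₁ = d * u - a • (u * d)) (hΩ₂ : Ω₂ = d * u - b • (u * d))
    (h1 : d ^ 2 * u = (a + b) • (d * u * d) + (-(a * b)) • (u * d ^ 2))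
    (h2 : d * u ^ 2 = (a + b) • (u * d * u) + (-(a * b)) • (u ^ 2 * d)) :
    d * Ω₁ = b • (Ω₁ * d) ∧
    Ω₁ * u = b • (u * Ω₁) ∧
    d * Ω₂ = a • (Ω₂ * d) ∧
    Ω₂ * u = a • (u * Ω₂) ∧
    (u * d) * Ω₁ = Ω₁ * (u * d) ∧
    (u * d) * Ω₂ = Ω₂ * (u * d) ∧
    (d * u) * Ω₁ = Ω₁ * (d * u) ∧
    (d * u) * Ω₂ = Ω₂ * (d * u) ∧
    Ω₁ * Ω₂ = Ω₂ * Ω₁ :=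
  downUp_omega_identities_general a b d u Ω₁ Ω₂ hΩ₁ hΩ₂ h1 h2
end

section
/- Let R be an associative unital algebra over a field k, let a, b ∈ k be nonzero, set α = a + b and β = −ab, and suppose d, u ∈ R satisfy the down-up relations d²u = α·dud + β·ud² and du² = α·udu + β·u²d. With Ω₁ = du − a·ud and Ω₂ = du − b·ud, for every positive integer n one has: (b−a)·ud = Ω₁ − Ω₂, (b−a)·du = b·Ω₁ − a·Ω₂, (b−a)ⁿ·(ab)^{n(n−1)/2}·uⁿdⁿ = ∏_{i=1}^{n} (a^{i−1}·Ω₁ − b^{i−1}·Ω₂), and (b−a)ⁿ·dⁿuⁿ = ∏_{i=1}^{n} (bⁱ·Ω₁ − aⁱ·Ω₂), where the factors in each product commute pairwise (so the products are well defined in any order). -/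
/-!
Write `Ω_c = du - c • ud`. The down-up relations say exactly that `d Ω_a = b • Ω_a d` and
`Ω_a u = b • u Ω_a`, and the same with `a` and `b` exchanged. Hence `Ω_a` commutes with `ud`, so
`Ω₁ = Ω_a` and `Ω₂ = Ω_b` commute; moving `d` from the left to the right of `x • Ω₁ - y • Ω₂`
turns it into `bx • Ω₁ - ay • Ω₂`, and moving `u` (at the cost of the scalar `ab`) into
`ax • Ω₁ - by • Ω₂`. In `xⁿ⁺¹yⁿ⁺¹ = xⁿ (xy) yⁿ`, for `(x, y) = (u, d)` or `(d, u)`, the factor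
`(b - a) • xy` is such a combination; pushing it out to the left past `xⁿ` and inducting on `n`
gives both product formulas.
-/

section

variable {k R : Type*} [CommRing k] [Ring R] [Algebra k R]

theorem Commute.smul_sub_smul {p q : R} (h : Commute p q) (x y x' y' : k) :
    Commute (x • p - y • q) (x' • p - y' • q) :=
  ((((Commute.refl p).smul_left x).smul_right x').sub_right
      ((h.smul_left x).smul_right y')).sub_left
    (((h.symm.smul_left y).smul_right x').sub_right
      (((Commute.refl q).smul_left y).smul_right y'))

theorem smul_pow_mul_eq_mul_pow {x : R} {c : k} {f : ℕ → R}
    (hx : ∀ i, c • (x * f i) = f (i + 1) * x) (n : ℕ) :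
    c ^ n • (x ^ n * f 0) = f n * x ^ n := by
  induction n with
  | zero => simp
  | succ n ih =>
    calc c ^ (n + 1) • (x ^ (n + 1) * f 0) = c • (x * (c ^ n • (x ^ n * f 0))) := by
          rw [pow_succ', pow_succ', mul_smul, mul_smul_comm, mul_assoc]
      _ = f (n + 1) * x ^ (n + 1) := by
          rw [ih, ← mul_assoc, ← smul_mul_assoc, hx, mul_assoc, ← pow_succ']

theorem smul_pow_mul_pow_eq_prod_range {x y : R} {s c : k} {f : ℕ → R}
    (hf : ∀ i j, Commute (f i) (f j)) (hx : ∀ i, c • (x * f i) = f (i + 1) * x)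
    (hxy : s • (x * y) = f 0) (n : ℕ) :
    (s ^ n * c ^ (n * (n - 1) / 2)) • (x ^ n * y ^ n) = ((List.range n).map f).prod := by
  induction n with
  | zero => simp
  | succ n ih =>
    calc (s ^ (n + 1) * c ^ ((n + 1) * (n + 1 - 1) / 2)) • (x ^ (n + 1) * y ^ (n + 1))
        = (s ^ n * c ^ (n * (n - 1) / 2)) • (c ^ n • (x ^ n * (s • (x * y))) * y ^ n) := by
          rw [Nat.triangle_succ, pow_succ x, pow_succ' y]
          simp only [pow_add, pow_succ, smul_mul_assoc, mul_smul_comm, smul_smul, mul_assoc]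
          module
      _ = f n * ((s ^ n * c ^ (n * (n - 1) / 2)) • (x ^ n * y ^ n)) := by
          rw [hxy, smul_pow_mul_eq_mul_pow hx, mul_assoc, mul_smul_comm]
      _ = ((List.range n).map f).prod * f n := by
          rw [ih]
          refine (Commute.list_prod_right _ _ fun z hz => ?_).eq
          obtain ⟨i, -, rfl⟩ := List.mem_map.mp hz
          exact hf n i
      _ = ((List.range (n + 1)).map f).prod := (List.prod_range_succ f n).symm

structure IsDownUpPair (a b : k) (d u : R) : Prop where
  sq_mul : d ^ 2 * u = (a + b) • (d * u * d) + (-(a * b)) • (u * d ^ 2)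
  mul_sq : d * u ^ 2 = (a + b) • (u * d * u) + (-(a * b)) • (u ^ 2 * d)

namespace IsDownUpPair

variable {a b : k} {d u : R} (h : IsDownUpPair a b d u)
include h

theorem symm : IsDownUpPair b a d u :=
  ⟨by rw [add_comm b, mul_comm b]; exact h.sq_mul, by rw [add_comm b, mul_comm b]; exact h.mul_sq⟩

theorem mul_omega : d * (d * u - a • (u * d)) = b • ((d * u - a • (u * d)) * d) := by
  have h1 := h.sq_mul
  simp only [pow_two, mul_sub, sub_mul, mul_smul_comm, smul_mul_assoc, mul_assoc] at h1 ⊢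
  linear_combination (norm := module) h1

theorem omega_mul : (d * u - a • (u * d)) * u = b • (u * (d * u - a • (u * d))) := by
  have h2 := h.mul_sq
  simp only [pow_two, mul_sub, sub_mul, mul_smul_comm, smul_mul_assoc, mul_assoc] at h2 ⊢
  linear_combination (norm := module) h2

theorem commute_omega : Commute (d * u - a • (u * d)) (d * u - b • (u * d)) := by
  have hud : Commute (d * u - a • (u * d)) (u * d) := by
    calc (d * u - a • (u * d)) * (u * d) = u * (b • ((d * u - a • (u * d)) * d)) := by
          rw [← mul_assoc, h.omega_mul, smul_mul_assoc, mul_smul_comm, mul_assoc]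
      _ = u * d * (d * u - a • (u * d)) := by rw [← h.mul_omega, mul_assoc]
  have hb : d * u - b • (u * d) = (d * u - a • (u * d)) + (a - b) • (u * d) := by module
  rw [hb]
  exact (Commute.refl _).add_right (hud.smul_right _)

theorem mul_smul_omega_sub_smul_omega (x y : k) :
    d * (x • (d * u - a • (u * d)) - y • (d * u - b • (u * d))) =
      ((b * x) • (d * u - a • (u * d)) - (a * y) • (d * u - b • (u * d))) * d := by
  rw [mul_sub, mul_smul_comm, mul_smul_comm, h.mul_omega, h.symm.mul_omega]
  simp only [sub_mul, smul_mul_assoc]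
  module

theorem smul_mul_smul_omega_sub_smul_omega (x y : k) :
    (a * b) • (u * (x • (d * u - a • (u * d)) - y • (d * u - b • (u * d)))) =
      ((a * x) • (d * u - a • (u * d)) - (b * y) • (d * u - b • (u * d))) * u := by
  rw [sub_mul, smul_mul_assoc, smul_mul_assoc, h.omega_mul, h.symm.omega_mul, mul_sub,
    mul_smul_comm, mul_smul_comm]
  module

end IsDownUpPair

end

theorem downUp_power_formulas_general
    {k : Type*} [Field k] {R : Type*} [Ring R] [Algebra k R]
    (a b : k) (d u Ω₁ Ω₂ : R)
    (hΩ₁ : Ω₁ = d * u - a • (u * d)) (hΩ₂ : Ω₂ = d * u - b • (u * d))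
    (h1 : d ^ 2 * u = (a + b) • (d * u * d) + (-(a * b)) • (u * d ^ 2))
    (h2 : d * u ^ 2 = (a + b) • (u * d * u) + (-(a * b)) • (u ^ 2 * d))
    (n : ℕ) :
    (b - a) • (u * d) = Ω₁ - Ω₂ ∧
    (b - a) • (d * u) = b • Ω₁ - a • Ω₂ ∧
    (∀ i j : ℕ, Commute (a ^ i • Ω₁ - b ^ i • Ω₂) (a ^ j • Ω₁ - b ^ j • Ω₂)) ∧
    (∀ i j : ℕ, Commute (b ^ i • Ω₁ - a ^ i • Ω₂) (b ^ j • Ω₁ - a ^ j • Ω₂)) ∧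
    ((b - a) ^ n * (a * b) ^ (n * (n - 1) / 2)) • (u ^ n * d ^ n) =
      ((List.range n).map (fun i => a ^ i • Ω₁ - b ^ i • Ω₂)).prod ∧
    ((b - a) ^ n) • (d ^ n * u ^ n) =
      ((List.range n).map (fun i => b ^ (i + 1) • Ω₁ - a ^ (i + 1) • Ω₂)).prod := by
  subst hΩ₁ hΩ₂
  have h : IsDownUpPair a b d u := ⟨h1, h2⟩
  have hud : (b - a) • (u * d) = (d * u - a • (u * d)) - (d * u - b • (u * d)) := by module
  have hdu : (b - a) • (d * u) = b • (d * u - a • (u * d)) - a • (d * u - b • (u * d)) := by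
    module
  have hcomm := h.commute_omega.smul_sub_smul (k := k)
  refine ⟨hud, hdu, fun i j => hcomm .., fun i j => hcomm .., ?_, ?_⟩
  · refine smul_pow_mul_pow_eq_prod_range (fun i j => hcomm ..) (fun i => ?_) ?_ n
    · rw [h.smul_mul_smul_omega_sub_smul_omega, ← pow_succ', ← pow_succ']
    · simpa only [pow_zero, one_smul] using hud
  · have := smul_pow_mul_pow_eq_prod_range (c := (1 : k))
      (f := fun i => b ^ (i + 1) • (d * u - a • (u * d)) - a ^ (i + 1) • (d * u - b • (u * d)))
      (fun i j => hcomm ..)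
      (fun i => by rw [one_smul, h.mul_smul_omega_sub_smul_omega, ← pow_succ', ← pow_succ'])
      (by simpa only [zero_add, pow_one] using hdu) n
    simpa only [one_pow, mul_one] using this

/-- Lemma 8.1 (denominators cleared): with `Ω₁ = du - a•ud`, `Ω₂ = du - b•ud`
and `d, u` satisfying the down-up relations, one has
`(b-a)•ud = Ω₁ - Ω₂`, `(b-a)•du = b•Ω₁ - a•Ω₂`,
`(b-a)ⁿ (ab)^{n(n-1)/2} • uⁿdⁿ = ∏_{i=1}^{n} (a^{i-1}•Ω₁ - b^{i-1}•Ω₂)` and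
`(b-a)ⁿ • dⁿuⁿ = ∏_{i=1}^{n} (bⁱ•Ω₁ - aⁱ•Ω₂)`, with all factors in each
product commuting pairwise. -/
theorem downUp_power_formulas
    {k : Type*} [Field k] {R : Type*} [Ring R] [Algebra k R]
    (a b : k) (ha : a ≠ 0) (hb : b ≠ 0) (d u Ω₁ Ω₂ : R)
    (hΩ₁ : Ω₁ = d * u - a • (u * d)) (hΩ₂ : Ω₂ = d * u - b • (u * d))
    (h1 : d ^ 2 * u = (a + b) • (d * u * d) + (-(a * b)) • (u * d ^ 2))
    (h2 : d * u ^ 2 = (a + b) • (u * d * u) + (-(a * b)) • (u ^ 2 * d))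
    (n : ℕ) (hn : 0 < n) :
    (b - a) • (u * d) = Ω₁ - Ω₂ ∧
    (b - a) • (d * u) = b • Ω₁ - a • Ω₂ ∧
    (∀ i j : ℕ, Commute (a ^ i • Ω₁ - b ^ i • Ω₂) (a ^ j • Ω₁ - b ^ j • Ω₂)) ∧
    (∀ i j : ℕ, Commute (b ^ i • Ω₁ - a ^ i • Ω₂) (b ^ j • Ω₁ - a ^ j • Ω₂)) ∧
    ((b - a) ^ n * (a * b) ^ (n * (n - 1) / 2)) • (u ^ n * d ^ n) =
      ((List.range n).map (fun i => a ^ i • Ω₁ - b ^ i • Ω₂)).prod ∧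
    ((b - a) ^ n) • (d ^ n * u ^ n) =
      ((List.range n).map (fun i => b ^ (i + 1) • Ω₁ - a ^ (i + 1) • Ω₂)).prod :=
  downUp_power_formulas_general a b d u Ω₁ Ω₂ hΩ₁ hΩ₂ h1 h2 n
end

section
/- For every integer n ≥ 1, the polynomial q(X) = (1 + X^{2n})(1 + X⁴) + 4X^{n+2} has a complex root that is not a root of unity; in particular q is not a product of cyclotomic polynomials. -/
/-!
Suppose every root `z` of `q` were a root of unity. Then `‖z‖ = 1`, so both factors of
`(1 + z^{2n})(1 + z⁴) = -4z^{n+2}` have norm at most `2` while their product has norm `4`;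
by strict convexity `z^{2n} = z⁴ = 1`, and then `z^{n+2} = -1`. For odd `n` this forces
`z = -1`, for even `n` it forces `z² = -1`, so `‖1 - z‖` is `2`, resp. `√2`, at each of the
`2n + 4` roots of the monic `q`. Comparing with `q(1) = 8` gives `8 = 2^{2n+4}`, resp.
`8 = 2^{n+2}` with `n ≥ 2`, both impossible.
-/

open Polynomial

theorem Polynomial.Splits.norm_eval_eq_pow_natDegree {K : Type*} [NormedField K] {P : K[X]}
    (hP : P.Splits) (hm : P.Monic) {x : K} {c : ℝ} (h : ∀ z ∈ P.roots, ‖x - z‖ = c) :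
    ‖P.eval x‖ = c ^ P.natDegree := by
  rw [hP.eval_eq_prod_roots_of_monic hm, hP.natDegree_eq_card_roots, ← Multiset.prod_replicate,
    ← Multiset.map_const', ← Multiset.map_congr rfl h]
  exact (map_multiset_prod (normHom : K →*₀ ℝ) _).trans (congrArg _ (Multiset.map_map _ _ _))

theorem Complex.eq_one_and_eq_one_of_norm_one_add_mul_one_add_eq_four {u v : ℂ} (hu : ‖u‖ = 1)
    (hv : ‖v‖ = 1) (h : ‖(1 + u) * (1 + v)‖ = 4) : u = 1 ∧ v = 1 := by
  have hu_le : ‖1 + u‖ ≤ 2 := (norm_add_le _ _).trans (by rw [norm_one, hu]; norm_num)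
  have hv_le : ‖1 + v‖ ≤ 2 := (norm_add_le _ _).trans (by rw [norm_one, hv]; norm_num)
  rw [norm_mul] at h
  have hu2 : ‖1 + u‖ = 2 := by nlinarith [norm_nonneg (1 + u), norm_nonneg (1 + v)]
  have hv2 : ‖1 + v‖ = 2 := by nlinarith [norm_nonneg (1 + u), norm_nonneg (1 + v)]
  have eq_one {w : ℂ} (hw : ‖w‖ = 1) (h2 : ‖1 + w‖ = 2) : w = 1 :=
    (eq_of_norm_eq_of_norm_add_eq (by rw [norm_one, hw]) (by rw [h2, norm_one, hw]; norm_num)).symm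
  exact ⟨eq_one hu hu2, eq_one hv hv2⟩

theorem exists_pow_eq_one_of_aeval_prod_cyclotomic_eq_zero {A : Type*} [CommRing A] [IsDomain A]
    {s : Multiset ℕ} {z : A} (h : aeval z (s.map (cyclotomic · ℤ)).prod = 0) :
    ∃ m ∈ s, z ^ m = 1 := by
  rw [map_multiset_prod, Multiset.prod_eq_zero_iff, Multiset.map_map] at h
  obtain ⟨m, hm, hz⟩ := Multiset.mem_map.mp h
  have hdvd := aeval_eq_zero_of_dvd_aeval_eq_zero (cyclotomic.dvd_X_pow_sub_one m ℤ) hz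
  exact ⟨m, hm, by simpa [sub_eq_zero] using hdvd⟩

theorem eq_neg_one_of_odd_of_pow_add_two_eq_neg_one {M : Type*} [Monoid M] [Neg M] {n : ℕ}
    (hn : Odd n) {z : M} (h2n : z ^ (2 * n) = 1) (h4 : z ^ 4 = 1) (hn2 : z ^ (n + 2) = -1) :
    z = -1 := by
  obtain ⟨k, rfl⟩ := hn
  have hz2 : z ^ 2 = 1 := by
    rwa [show 2 * (2 * k + 1) = 4 * k + 2 by ring, pow_add, pow_mul, h4, one_pow, one_mul] at h2n
  rwa [show 2 * k + 1 + 2 = 2 * (k + 1) + 1 by ring, pow_succ, pow_mul, hz2, one_pow,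
    one_mul] at hn2

theorem sq_eq_neg_one_of_even_of_pow_add_two_eq_neg_one {n : ℕ} (hn : Even n) {z : ℂ}
    (h4 : z ^ 4 = 1) (hn2 : z ^ (n + 2) = -1) : z ^ 2 = -1 := by
  obtain ⟨k, rfl⟩ := hn
  rw [show k + k + 2 = 2 * (k + 1) by ring, pow_mul] at hn2
  rcases sq_eq_one_iff.mp (show (z ^ 2) ^ 2 = 1 by rw [← pow_mul]; exact h4) with h | h
  · rw [h, one_pow] at hn2
    norm_num at hn2
  · exact h

theorem Complex.norm_one_sub_eq_sqrt_two_of_sq_eq_neg_one {z : ℂ} (h : z ^ 2 = -1) :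
    ‖1 - z‖ = √2 := by
  have hz : ‖z‖ = 1 :=
    norm_eq_one_of_pow_eq_one (n := 4) (by linear_combination (z ^ 2 - 1) * h) (by norm_num)
  have hsq : (1 - z) ^ 2 = -2 * z := by linear_combination h
  rw [← Real.sqrt_sq (norm_nonneg _), ← norm_pow, hsq]
  simp [hz]

noncomputable def qPoly (R : Type*) [CommRing R] (n : ℕ) : R[X] :=
  (1 + X ^ (2 * n)) * (1 + X ^ 4) + 4 * X ^ (n + 2)

section qPoly

variable {R : Type*} [CommRing R] {n : ℕ}

theorem eval_qPoly (z : R) :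
    (qPoly R n).eval z = (1 + z ^ (2 * n)) * (1 + z ^ 4) + 4 * z ^ (n + 2) := by
  simp [qPoly]

theorem eval_one_qPoly : (qPoly R n).eval 1 = 8 := by
  rw [eval_qPoly]; norm_num

theorem qPoly_monic (hn : 1 ≤ n) : (qPoly R n).Monic := by
  unfold qPoly
  monicity!
  simp [show n ≤ 2 * n + 2 by omega, show n ≠ 0 by omega, show ¬2 * n + 4 ≤ n + 2 by omega]

theorem natDegree_qPoly [Nontrivial R] (hn : 1 ≤ n) : (qPoly R n).natDegree = 2 * n + 4 := by
  unfold qPoly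
  compute_degree! <;> first | omega | simp [show n ≠ 0 by omega, show 2 * n + 2 ≠ n by omega]

end qPoly

theorem pow_eq_of_isRoot_qPoly_of_pow_eq_one {n m : ℕ} {z : ℂ} (hz : (qPoly ℂ n).IsRoot z)
    (hm : m ≠ 0) (h1 : z ^ m = 1) : z ^ (2 * n) = 1 ∧ z ^ 4 = 1 ∧ z ^ (n + 2) = -1 := by
  have hz1 : ‖z‖ = 1 := Complex.norm_eq_one_of_pow_eq_one h1 hm
  rw [IsRoot, eval_qPoly] at hz
  have hnorm : ‖(1 + z ^ (2 * n)) * (1 + z ^ 4)‖ = 4 := by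
    rw [show (1 + z ^ (2 * n)) * (1 + z ^ 4) = -4 * z ^ (n + 2) by linear_combination hz]
    simp [hz1]
  obtain ⟨h2n, h4⟩ :=
    Complex.eq_one_and_eq_one_of_norm_one_add_mul_one_add_eq_four (by simp [hz1]) (by simp [hz1])
      hnorm
  exact ⟨h2n, h4, by linear_combination (hz - (1 + z ^ 4) * h2n - 2 * h4) / 4⟩

theorem exists_isRoot_qPoly_forall_pow_ne_one {n : ℕ} (hn : 1 ≤ n) :
    ∃ z : ℂ, (qPoly ℂ n).IsRoot z ∧ ∀ m : ℕ, 0 < m → z ^ m ≠ 1 := by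
  by_contra! h
  have hroots (z) (hz : z ∈ (qPoly ℂ n).roots) :
      z ^ (2 * n) = 1 ∧ z ^ 4 = 1 ∧ z ^ (n + 2) = -1 := by
    obtain ⟨m, hm, h1⟩ := h z (isRoot_of_mem_roots hz)
    exact pow_eq_of_isRoot_qPoly_of_pow_eq_one (isRoot_of_mem_roots hz) hm.ne' h1
  have key (c : ℝ) (hc : ∀ z ∈ (qPoly ℂ n).roots, ‖1 - z‖ = c) :
      8 = c ^ (2 * n + 4) := by
    have := (IsAlgClosed.splits _).norm_eval_eq_pow_natDegree (qPoly_monic hn) hc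
    rwa [eval_one_qPoly, natDegree_qPoly hn, Complex.norm_ofNat] at this
  rcases Nat.even_or_odd n with he | ho
  · have h8 := key √2 fun z hz ↦ by
      obtain ⟨-, h4, hn2⟩ := hroots z hz
      exact Complex.norm_one_sub_eq_sqrt_two_of_sq_eq_neg_one
        (sq_eq_neg_one_of_even_of_pow_add_two_eq_neg_one he h4 hn2)
    rw [show 2 * n + 4 = 2 * (n + 2) by ring, pow_mul, Real.sq_sqrt zero_le_two] at h8
    have : (2 : ℝ) ^ 4 ≤ 2 ^ (n + 2) :=
      pow_le_pow_right₀ one_le_two (by obtain ⟨k, rfl⟩ := he; omega)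
    linarith
  · have h8 := key 2 fun z hz ↦ by
      obtain ⟨h2n, h4, hn2⟩ := hroots z hz
      rw [eq_neg_one_of_odd_of_pow_add_two_eq_neg_one ho h2n h4 hn2]
      norm_num
    have : (2 : ℝ) ^ 6 ≤ 2 ^ (2 * n + 4) := pow_le_pow_right₀ one_le_two (by omega)
    linarith

/-- Lemma 8.6(2): for `n ≥ 1`, `q(X) = (1 + X^{2n})(1 + X⁴) + 4X^{n+2}`
has a complex root that is not a root of unity; in particular `q` is not a
product of cyclotomic polynomials. -/
theorem not_cyclotomic_product_two
    (n : ℕ) (hn : 1 ≤ n) :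
    (∃ z : ℂ, (1 + z ^ (2 * n)) * (1 + z ^ 4) + 4 * z ^ (n + 2) = 0 ∧
      ∀ m : ℕ, 0 < m → z ^ m ≠ 1) ∧
    ¬ ∃ s : Multiset ℕ, (∀ m ∈ s, 0 < m) ∧
      ((1 + X ^ (2 * n)) * (1 + X ^ 4) + 4 * X ^ (n + 2) : Polynomial ℤ) =
        (s.map (fun m => cyclotomic m ℤ)).prod := by
  obtain ⟨z, hz, hz_ne⟩ := exists_isRoot_qPoly_forall_pow_ne_one hn
  rw [IsRoot, eval_qPoly] at hz
  refine ⟨⟨z, hz, hz_ne⟩, ?_⟩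
  rintro ⟨s, hs, hq⟩
  have hzero : aeval z (s.map (cyclotomic · ℤ)).prod = 0 := by
    rw [← hq]
    simpa [map_ofNat] using hz
  obtain ⟨m, hm, hzm⟩ := exists_pow_eq_one_of_aeval_prod_cyclotomic_eq_zero hzero
  exact hz_ne m (hs m hm) hzm
end

section
/- For every natural number n ≥ 1 and every real number s with 0 < s ≤ 1/8, one has cos(4πs)·cos(2πns) + (cos(2πs))² > 0; indeed cos(4πs)·(cos(2πns) + 1) ≥ 0 and cos(4πs)·cos(2πns) + (cos(2πs))² ≥ (sin(2πs))². -/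
open Real

theorem cos_two_mul_mul_cos_add_cos_sq (x y : ℝ) :
    cos (2 * x) * cos y + cos x ^ 2 = cos (2 * x) * (cos y + 1) + sin x ^ 2 := by
  rw [cos_two_mul']
  ring

theorem cos_two_mul_mul_cos_add_one_nonneg {x : ℝ} (hx : 0 ≤ cos (2 * x)) (y : ℝ) :
    0 ≤ cos (2 * x) * (cos y + 1) :=
  mul_nonneg hx (by linarith [neg_one_le_cos y])

theorem sin_sq_le_cos_two_mul_mul_cos_add_cos_sq {x : ℝ} (hx : 0 ≤ cos (2 * x)) (y : ℝ) :
    sin x ^ 2 ≤ cos (2 * x) * cos y + cos x ^ 2 := by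
  rw [cos_two_mul_mul_cos_add_cos_sq]
  linarith [cos_two_mul_mul_cos_add_one_nonneg hx y]

theorem cos_four_mul_pi_nonneg {s : ℝ} (hs0 : 0 ≤ s) (hs : s ≤ 1 / 8) :
    0 ≤ cos (4 * π * s) :=
  cos_nonneg_of_mem_Icc ⟨by nlinarith [pi_pos], by nlinarith [pi_pos]⟩

theorem sin_two_mul_pi_pos {s : ℝ} (hs0 : 0 < s) (hs : s < 1 / 2) :
    0 < sin (2 * π * s) :=
  sin_pos_of_pos_of_lt_pi (by positivity) (by nlinarith [pi_pos])

theorem cos_estimate_general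
    (n : ℕ) (s : ℝ) (hs0 : 0 < s) (hs : s ≤ 1 / 8) :
    Real.cos (4 * π * s) * (Real.cos (2 * π * n * s) + 1) ≥ 0 ∧
    Real.cos (4 * π * s) * Real.cos (2 * π * n * s) + (Real.cos (2 * π * s)) ^ 2
      ≥ (Real.sin (2 * π * s)) ^ 2 ∧
    Real.cos (4 * π * s) * Real.cos (2 * π * n * s) + (Real.cos (2 * π * s)) ^ 2 > 0 := by
  have hcos : 0 ≤ cos (2 * (2 * π * s)) := by
    rw [show 2 * (2 * π * s) = 4 * π * s by ring]
    exact cos_four_mul_pi_nonneg hs0.le hs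
  have hsin : 0 < sin (2 * π * s) := sin_two_mul_pi_pos hs0 (by linarith)
  have hsq := sin_sq_le_cos_two_mul_mul_cos_add_cos_sq hcos (2 * π * n * s)
  have hprod := cos_two_mul_mul_cos_add_one_nonneg hcos (2 * π * n * s)
  rw [show 2 * (2 * π * s) = 4 * π * s by ring] at hsq hprod
  exact ⟨hprod, hsq, (pow_pos hsin 2).trans_le hsq⟩

/-- The key estimate in the proof of Lemma 8.6(1): for `n ≥ 1` and
`0 < s ≤ 1/8`, one has `cos(4πs)(cos(2πns) + 1) ≥ 0`,
`cos(4πs)cos(2πns) + cos²(2πs) ≥ sin²(2πs)`, and hence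
`cos(4πs)cos(2πns) + cos²(2πs) > 0`. -/
theorem cos_estimate
    (n : ℕ) (hn : 1 ≤ n) (s : ℝ) (hs0 : 0 < s) (hs : s ≤ 1 / 8) :
    Real.cos (4 * π * s) * (Real.cos (2 * π * n * s) + 1) ≥ 0 ∧
    Real.cos (4 * π * s) * Real.cos (2 * π * n * s) + (Real.cos (2 * π * s)) ^ 2
      ≥ (Real.sin (2 * π * s)) ^ 2 ∧
    Real.cos (4 * π * s) * Real.cos (2 * π * n * s) + (Real.cos (2 * π * s)) ^ 2 > 0 :=
  cos_estimate_general n s hs0 hs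
end

section
/- Let R be an associative unital ring and X, Y ∈ R elements satisfying YX = −XY. Then 4·(XY)² + (X + Y)·((X − Y)XY) + ((X − Y)XY)·(X + Y) = 0; that is, setting X₁ = X + Y and X₂ = (X − Y)XY, one has (XY)² = −(1/4)(X₁X₂ + X₂X₁) whenever 4 is invertible. -/
/-!
`XY` anticommutes with `X` and with `Y`, hence with `X₁ = X + Y`. Therefore
`X₁X₂ + X₂X₁ = (X₁(X - Y) - (X - Y)X₁) · XY`, and the commutator
`[X + Y, X - Y] = 2(YX - XY)` equals `-4XY`.
-/

section Anticommuting

variable {R : Type*} {X Y : R}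

section NonUnitalRing

variable [NonUnitalRing R]

theorem mul_mul_left_eq_neg_of_anticomm (h : Y * X = -(X * Y)) :
    X * Y * X = -(X * (X * Y)) := by
  rw [mul_assoc, h, mul_neg]

theorem mul_mul_right_eq_neg_of_anticomm (h : Y * X = -(X * Y)) :
    X * Y * Y = -(Y * (X * Y)) := by
  rw [← mul_assoc Y, h, neg_mul, neg_neg]

theorem mul_mul_add_eq_neg_of_anticomm (h : Y * X = -(X * Y)) :
    X * Y * (X + Y) = -((X + Y) * (X * Y)) := by
  rw [mul_add, add_mul, mul_mul_left_eq_neg_of_anticomm h,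
    mul_mul_right_eq_neg_of_anticomm h, neg_add]

end NonUnitalRing

variable [Ring R]

theorem commutator_add_sub_of_anticomm (h : Y * X = -(X * Y)) :
    (X + Y) * (X - Y) - (X - Y) * (X + Y) = -(4 * (X * Y)) := by
  have hcomm : (X + Y) * (X - Y) - (X - Y) * (X + Y) = 2 * (Y * X - X * Y) := by
    noncomm_ring
  rw [hcomm, h]
  noncomm_ring

theorem anticommutator_add_sub_mul_mul_of_anticomm (h : Y * X = -(X * Y)) :
    (X + Y) * ((X - Y) * X * Y) + ((X - Y) * X * Y) * (X + Y) = -(4 * (X * Y) ^ 2) :=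
  calc (X + Y) * ((X - Y) * X * Y) + ((X - Y) * X * Y) * (X + Y)
      = (X + Y) * (X - Y) * (X * Y) + (X - Y) * (X * Y * (X + Y)) := by
        simp only [mul_assoc]
    _ = ((X + Y) * (X - Y) - (X - Y) * (X + Y)) * (X * Y) := by
        rw [mul_mul_add_eq_neg_of_anticomm h]
        noncomm_ring
    _ = -(4 * (X * Y) ^ 2) := by
        rw [commutator_add_sub_of_anticomm h, neg_mul, mul_assoc, sq]

end Anticommuting

/-- Remark 2.6: if `YX = -XY`, then with `X₁ = X + Y` and `X₂ = (X - Y)XY` one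
has `4(XY)² + X₁X₂ + X₂X₁ = 0`; that is, `(XY)² = -(1/4)(X₁X₂ + X₂X₁)`
whenever `4` is invertible. -/
theorem skew_fixed_ring_identity
    {R : Type*} [Ring R] (X Y : R) (h : Y * X = -(X * Y)) :
    4 * (X * Y) ^ 2 + (X + Y) * ((X - Y) * X * Y) + ((X - Y) * X * Y) * (X + Y) = 0 ∧
    ∀ w : Invertible (4 : R),
      (X * Y) ^ 2 =
        -(w.invOf * ((X + Y) * ((X - Y) * X * Y) + ((X - Y) * X * Y) * (X + Y))) := by
  have hsum := anticommutator_add_sub_mul_mul_of_anticomm h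
  refine ⟨by rw [add_assoc, hsum, add_neg_cancel], fun w => ?_⟩
  rw [hsum, mul_neg, neg_neg, ← mul_assoc, invOf_mul_self, one_mul]
end

section
/- Let R be an associative unital ring, X, Y ∈ R with YX = −XY, and let n = 2m be an even positive integer. Setting X₁ = Xⁿ + Yⁿ, X₂ = (Xⁿ − Yⁿ)XY, and X₃ = (XY)², one has X₂² − X₁²·X₃ + 4·(−1)^{n(n−1)/2}·X₃^{n/2+1} = 0. -/
/-!
Put `A = X²`, `B = Y²`, `D = XY`. Anticommutation of `X` and `Y` makes `A`, `B`, `D` pairwise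
commute, with `D² = -AB`, and `(-1)^(n(n-1)/2) = (-1)^m`. Since `Xⁿ = Aᵐ`, `Yⁿ = Bᵐ`, the relation
becomes `((Aᵐ - Bᵐ)D)² - (Aᵐ + Bᵐ)²D² + 4(-1)ᵐ(D²)^(m+1) = 0`, an identity in the commutative
subring generated by `A`, `B`, `D`: the first two terms give `-4AᵐBᵐD²`, and
`(-1)ᵐ(D²)ᵐ = (AB)ᵐ`.
-/

theorem commute_sq_of_mul_eq_neg {R : Type*} [Ring R] {X Y : R} (h : Y * X = -(X * Y)) :
    Commute (X ^ 2) Y := by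
  rw [Commute, SemiconjBy, sq, ← mul_assoc Y, h, neg_mul, mul_assoc X Y X, h, mul_neg, neg_neg,
    mul_assoc]

theorem mul_sq_of_mul_eq_neg {R : Type*} [Ring R] {X Y : R} (h : Y * X = -(X * Y)) :
    (X * Y) ^ 2 = -(X ^ 2 * Y ^ 2) := by
  rw [sq, mul_assoc, ← mul_assoc Y, h]
  noncomm_ring

theorem neg_one_pow_choose_two_even {M : Type*} [Monoid M] [HasDistribNeg M] (m : ℕ) :
    (-1 : M) ^ (2 * m * (2 * m - 1) / 2) = (-1) ^ m := by
  rw [mul_assoc, Nat.mul_div_cancel_left _ two_pos]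
  rcases m.eq_zero_or_pos with rfl | hm
  · rfl
  · rw [Nat.mul_comm, pow_mul, (by omega : 2 * m - 1 = 2 * (m - 1) + 1),
      (Odd.neg_one_pow ⟨m - 1, rfl⟩ : (-1 : M) ^ (2 * (m - 1) + 1) = -1)]

theorem dihedral_identity {S : Type*} [CommRing S] (a b d : S) (hd : d ^ 2 = -(a * b)) (m : ℕ) :
    ((a ^ m - b ^ m) * d) ^ 2 - (a ^ m + b ^ m) ^ 2 * d ^ 2 + 4 * (-1) ^ m * (d ^ 2) ^ (m + 1)
      = 0 := by
  rw [mul_pow, pow_succ (d ^ 2), hd, mul_assoc 4, ← mul_assoc ((-1) ^ m), ← mul_pow, neg_one_mul,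
    neg_neg]
  ring

open scoped IsMulCommutative in
theorem dihedral_identity_of_commute {R : Type*} [Ring R] {a b d : R} (hab : Commute a b)
    (had : Commute a d) (hbd : Commute b d) (hd : d ^ 2 = -(a * b)) (m : ℕ) :
    ((a ^ m - b ^ m) * d) ^ 2 - (a ^ m + b ^ m) ^ 2 * d ^ 2 + 4 * (-1) ^ m * (d ^ 2) ^ (m + 1)
      = 0 := by
  have := Subring.isMulCommutative_closure (s := {a, b, d}) (by
    simp only [Set.mem_insert_iff, Set.mem_singleton_iff]
    rintro x (rfl | rfl | rfl) y (rfl | rfl | rfl) <;> first | rfl | assumption | exact Eq.symm ‹_›)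
  let a' : Subring.closure {a, b, d} := ⟨a, Subring.subset_closure (by simp)⟩
  let b' : Subring.closure {a, b, d} := ⟨b, Subring.subset_closure (by simp)⟩
  let d' : Subring.closure {a, b, d} := ⟨d, Subring.subset_closure (by simp)⟩
  have identity := congrArg Subtype.val (dihedral_identity a' b' d' (Subtype.ext hd) m)
  push_cast at identity
  exact identity

theorem dihedral_relation_even_general
    {R : Type*} [Ring R] (X Y : R) (h : Y * X = -(X * Y))
    (m : ℕ) (n : ℕ) (hn : n = 2 * m)
    (X₁ X₂ X₃ : R)
    (hX₁ : X₁ = X ^ n + Y ^ n) (hX₂ : X₂ = (X ^ n - Y ^ n) * X * Y)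
    (hX₃ : X₃ = (X * Y) ^ 2) :
    X₂ ^ 2 - X₁ ^ 2 * X₃ + 4 * (-1 : R) ^ (n * (n - 1) / 2) * X₃ ^ (n / 2 + 1) = 0 := by
  subst hn hX₁ hX₂ hX₃
  have hXY : Commute (X ^ 2) Y := commute_sq_of_mul_eq_neg h
  have hYX : Commute (Y ^ 2) X := commute_sq_of_mul_eq_neg (neg_eq_iff_eq_neg.mp h.symm)
  rw [neg_one_pow_choose_two_even, Nat.mul_div_cancel_left m two_pos, pow_mul X, pow_mul Y,
    mul_assoc _ X Y]
  exact dihedral_identity_of_commute (hXY.pow_right 2)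
    (((Commute.refl X).pow_left 2).mul_right hXY) (hYX.mul_right ((Commute.refl Y).pow_left 2))
    (mul_sq_of_mul_eq_neg h) m

/-- Lemma 2.5 (Case (ii), `n` even): if `YX = -XY` and `n = 2m > 0`, then with
`X₁ = Xⁿ + Yⁿ`, `X₂ = (Xⁿ - Yⁿ)XY`, `X₃ = (XY)²` one has
`X₂² - X₁²X₃ + 4(-1)^{n(n-1)/2} X₃^{n/2+1} = 0`. -/
theorem dihedral_relation_even
    {R : Type*} [Ring R] (X Y : R) (h : Y * X = -(X * Y))
    (m : ℕ) (hm : 0 < m) (n : ℕ) (hn : n = 2 * m)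
    (X₁ X₂ X₃ : R)
    (hX₁ : X₁ = X ^ n + Y ^ n) (hX₂ : X₂ = (X ^ n - Y ^ n) * X * Y)
    (hX₃ : X₃ = (X * Y) ^ 2) :
    X₂ ^ 2 - X₁ ^ 2 * X₃ + 4 * (-1 : R) ^ (n * (n - 1) / 2) * X₃ ^ (n / 2 + 1) = 0 :=
  dihedral_relation_even_general X Y h m n hn X₁ X₂ X₃ hX₁ hX₂ hX₃
end

section
/- Let R be an associative unital ring, X, Y ∈ R with YX = −XY, and let n be an odd positive integer. Setting X₁ = Xⁿ + Yⁿ, X₂ = (Xⁿ − Yⁿ)XY, and X₃ = (XY)², one has X₂X₁ + X₁X₂ = −4·(−1)^{n(n−1)/2}·X₃^{(n+1)/2} and X₂² + X₁²·X₃ = 0. -/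
/-!
Put `A = Xⁿ`, `B = Yⁿ`, `P = XY`. Since `n` is odd, `A`, `B` and `P` pairwise anticommute, and
`X₁ = A + B`, `X₂ = (A - B)P`, `X₃ = P²`. For pairwise anticommuting `A, B, P` one has
`X₂X₁ + X₁X₂ = -4ABP` and `X₂² + X₁²P² = 0` by direct expansion. Finally
`(XY)ᵐ = (-1)^(m choose 2) XᵐYᵐ`, so `X₃^((n+1)/2) = (XY)ⁿ⁺¹ = (-1)^(n choose 2) ABP`.
-/

section Anticommuting

variable {R : Type*} [Ring R] {a b c : R}

theorem mul_pow_eq_neg_pow_mul_of_anticomm (h : b * a = -(a * b)) (m : ℕ) :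
    b * a ^ m = (-a) ^ m * b :=
  SemiconjBy.pow_right (by rwa [SemiconjBy, neg_mul]) m

theorem mul_pow_eq_neg_of_anticomm_of_odd (h : b * a = -(a * b)) {n : ℕ} (hn : Odd n) :
    b * a ^ n = -(a ^ n * b) := by
  rw [mul_pow_eq_neg_pow_mul_of_anticomm h, hn.neg_pow, neg_mul]

theorem mul_pow_of_anticomm (h : b * a = -(a * b)) (m : ℕ) :
    (a * b) ^ m = (-1) ^ m.choose 2 * (a ^ m * b ^ m) := by
  have hsign (k : ℕ) (x y : R) : x * ((-1) ^ k * y) = (-1) ^ k * (x * y) :=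
    ((Commute.neg_one_right x).pow_right k).left_comm y
  induction m with
  | zero => simp
  | succ m ih =>
    calc (a * b) ^ (m + 1) = (-1) ^ m.choose 2 * (a * (b * a ^ m) * b ^ m) := by
          rw [pow_succ', ih]; simp only [mul_assoc, hsign (m.choose 2)]
      _ = (-1) ^ m.choose 2 * ((-1) ^ m * (a ^ (m + 1) * b ^ (m + 1))) := by
          rw [mul_pow_eq_neg_pow_mul_of_anticomm h, neg_pow a, pow_succ', pow_succ']
          simp only [mul_assoc, hsign m]
      _ = (-1) ^ (m + 1).choose 2 * (a ^ (m + 1) * b ^ (m + 1)) := by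
          rw [Nat.choose_succ_succ', Nat.choose_one_right, pow_add (-1 : R),
            mul_assoc ((-1 : R) ^ m), hsign]

theorem mul_mul_anticomm_of_commute_of_anticomm (ha : Commute a c) (hb : b * c = -(c * b)) :
    a * b * c = -(c * (a * b)) := by
  rw [mul_assoc, hb, mul_neg, ← mul_assoc, ha.eq, mul_assoc]

theorem mul_mul_anticomm_of_anticomm_of_commute (ha : a * c = -(c * a)) (hb : Commute b c) :
    a * b * c = -(c * (a * b)) := by
  rw [mul_assoc, hb.eq, ← mul_assoc, ha, neg_mul, mul_assoc]

end Anticommuting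

section PairwiseAnticommuting

variable {R : Type*} [Ring R] {A B P : R}

theorem anticommutator_sub_mul_add_of_anticomm (hPA : P * A = -(A * P))
    (hPB : P * B = -(B * P)) (hBA : B * A = -(A * B)) :
    (A - B) * P * (A + B) + (A + B) * ((A - B) * P) = -(4 * (A * B * P)) := by
  linear_combination (norm := noncomm_ring) (A - B) * hPA + (A - B) * hPB + 2 * hBA * P

theorem sub_mul_sq_add_add_sq_mul_sq_of_anticomm (hPA : P * A = -(A * P))
    (hPB : P * B = -(B * P)) (hBA : B * A = -(A * B)) :
    ((A - B) * P) ^ 2 + (A + B) ^ 2 * P ^ 2 = 0 := by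
  linear_combination (norm := noncomm_ring) (A - B) * (hPA - hPB) * P + 2 * hBA * P ^ 2

end PairwiseAnticommuting

theorem dihedral_relation_odd_general
    {R : Type*} [Ring R] (X Y : R) (h : Y * X = -(X * Y))
    (n : ℕ) (hodd : Odd n)
    (X₁ X₂ X₃ : R)
    (hX₁ : X₁ = X ^ n + Y ^ n) (hX₂ : X₂ = (X ^ n - Y ^ n) * X * Y)
    (hX₃ : X₃ = (X * Y) ^ 2) :
    X₂ * X₁ + X₁ * X₂ = -(4 * (-1 : R) ^ (n * (n - 1) / 2) * X₃ ^ ((n + 1) / 2)) ∧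
    X₂ ^ 2 + X₁ ^ 2 * X₃ = 0 := by
  have hXY : X * Y = -(Y * X) := by rw [h, neg_neg]
  have hYA : Y * X ^ n = -(X ^ n * Y) := mul_pow_eq_neg_of_anticomm_of_odd h hodd
  have hXB : X * Y ^ n = -(Y ^ n * X) := mul_pow_eq_neg_of_anticomm_of_odd hXY hodd
  have hBX : Y ^ n * X = -(X * Y ^ n) := by rw [hXB, neg_neg]
  have hBA : Y ^ n * X ^ n = -(X ^ n * Y ^ n) := mul_pow_eq_neg_of_anticomm_of_odd hBX hodd
  have hPA : X * Y * X ^ n = -(X ^ n * (X * Y)) :=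
    mul_mul_anticomm_of_commute_of_anticomm (Commute.self_pow X n) hYA
  have hPB : X * Y * Y ^ n = -(Y ^ n * (X * Y)) :=
    mul_mul_anticomm_of_anticomm_of_commute hXB (Commute.self_pow Y n)
  have hX₃pow : (-1) ^ n.choose 2 * X₃ ^ ((n + 1) / 2) = X ^ n * Y ^ n * (X * Y) := by
    rw [hX₃, ← pow_mul, Nat.two_mul_div_two_of_even hodd.add_one, pow_succ,
      mul_pow_of_anticomm h, ← mul_assoc _ _ (X * Y), ← mul_assoc ((-1 : R) ^ _), ← pow_add,
      Even.neg_one_pow ⟨_, rfl⟩, one_mul]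
  have hX₂' : X₂ = (X ^ n - Y ^ n) * (X * Y) := by rw [hX₂, mul_assoc]
  constructor
  · rw [← Nat.choose_two_right, mul_assoc, hX₃pow, hX₁, hX₂']
    exact anticommutator_sub_mul_add_of_anticomm hPA hPB hBA
  · rw [hX₁, hX₂', hX₃]
    exact sub_mul_sq_add_add_sq_mul_sq_of_anticomm hPA hPB hBA

/-- Lemma 2.5 (Case (ii), `n` odd): if `YX = -XY` and `n` is odd positive,
then with `X₁ = Xⁿ + Yⁿ`, `X₂ = (Xⁿ - Yⁿ)XY`, `X₃ = (XY)²` one has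
`X₂X₁ + X₁X₂ = -4(-1)^{n(n-1)/2} X₃^{(n+1)/2}` and `X₂² + X₁²X₃ = 0`. -/
theorem dihedral_relation_odd
    {R : Type*} [Ring R] (X Y : R) (h : Y * X = -(X * Y))
    (n : ℕ) (hodd : Odd n) (hn : 0 < n)
    (X₁ X₂ X₃ : R)
    (hX₁ : X₁ = X ^ n + Y ^ n) (hX₂ : X₂ = (X ^ n - Y ^ n) * X * Y)
    (hX₃ : X₃ = (X * Y) ^ 2) :
    X₂ * X₁ + X₁ * X₂ = -(4 * (-1 : R) ^ (n * (n - 1) / 2) * X₃ ^ ((n + 1) / 2)) ∧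
    X₂ ^ 2 + X₁ ^ 2 * X₃ = 0 :=
  dihedral_relation_odd_general X Y h n hodd X₁ X₂ X₃ hX₁ hX₂ hX₃
end

section
/- Let n ≥ 1 be an integer, ε ∈ ℂ a primitive 2n-th root of unity, and t ∈ ℂ with t^{2n} ≠ 1 and t⁴ ≠ 1. Then ∑_{i=0}^{2n−1} 1/((1 + εⁱt)(1 − ε^{−i}t)) = 2n(1 − t^{4n})(1 − t²) / ((1 − t^{2n})²(1 − t⁴)). -/
/-!
Writing `1 + εⁱt = 1 - εⁱ(-t)` and `1 - ε⁻ⁱt = 1 - (ε⁻¹)ⁱt`, the partial fraction identity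
`1/((1-x)(1-y)) = (1/(1-x) + 1/(1-y) - 1)/(1-xy)` with `xy = -t²` splits each term, and both
resulting sums are instances of `∑_{i<m} 1/(1 - εⁱs) = m/(1 - s^m)` for a primitive `m`-th root
`ε`. That identity follows by expanding `1/(1 - εⁱs) = (∑_{k<m} (εⁱs)^k)/(1 - s^m)` and
exchanging the sums: `∑_i (εᵏ)ⁱ` vanishes unless `k = 0`.
-/

open Finset

section

variable {K : Type*} [Field K]

theorem one_div_one_sub_mul_one_sub {x y : K} (hx : 1 - x ≠ 0) (hy : 1 - y ≠ 0)
    (hxy : 1 - x * y ≠ 0) :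
    1 / ((1 - x) * (1 - y)) = (1 / (1 - x) + 1 / (1 - y) - 1) / (1 - x * y) := by
  field_simp
  ring

theorem pow_mul_pow_of_pow_eq_one {ε : K} {m : ℕ} (hε : ε ^ m = 1) (i : ℕ) (s : K) :
    (ε ^ i * s) ^ m = s ^ m := by
  rw [mul_pow, pow_right_comm, hε, one_pow, one_mul]

theorem one_sub_pow_mul_ne_zero {ε s : K} {m : ℕ} (hε : ε ^ m = 1) (hs : s ^ m ≠ 1) (i : ℕ) :
    1 - ε ^ i * s ≠ 0 := fun h => by
  rw [← pow_mul_pow_of_pow_eq_one hε i, ← sub_eq_zero.mp h, one_pow] at hs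
  exact hs rfl

namespace IsPrimitiveRoot

theorem sum_pow_pow_eq_ite {ε : K} {m : ℕ} (hε : IsPrimitiveRoot ε m) {k : ℕ} (hk : k < m) :
    ∑ i ∈ range m, (ε ^ k) ^ i = if k = 0 then (m : K) else 0 := by
  split_ifs with h0
  · simp [h0]
  · rw [geom_sum_eq (hε.pow_ne_one_of_pos_of_lt h0 hk), pow_right_comm, hε.pow_eq_one, one_pow,
      sub_self, zero_div]

theorem sum_one_div_one_sub_pow_mul {ε : K} {m : ℕ} (hε : IsPrimitiveRoot ε m) {s : K}
    (hs : s ^ m ≠ 1) :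
    ∑ i ∈ range m, 1 / (1 - ε ^ i * s) = m / (1 - s ^ m) := by
  have hm : 0 < m := Nat.pos_of_ne_zero (by rintro rfl; exact hs (pow_zero s))
  have hgeom (i : ℕ) : 1 / (1 - ε ^ i * s) = (∑ k ∈ range m, (ε ^ i * s) ^ k) / (1 - s ^ m) := by
    rw [div_eq_div_iff (one_sub_pow_mul_ne_zero hε.pow_eq_one hs i) (sub_ne_zero.mpr hs.symm),
      one_mul, ← pow_mul_pow_of_pow_eq_one hε.pow_eq_one i s, ← mul_neg_geom_sum, mul_comm]
  calc ∑ i ∈ range m, 1 / (1 - ε ^ i * s)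
      = (∑ k ∈ range m, (∑ i ∈ range m, (ε ^ k) ^ i) * s ^ k) / (1 - s ^ m) := by
        rw [sum_congr rfl fun i _ => hgeom i, ← sum_div, sum_comm]
        simp_rw [sum_mul, mul_pow, pow_right_comm ε]
    _ = m / (1 - s ^ m) := by
        rw [sum_congr rfl fun k hk => by rw [hε.sum_pow_pow_eq_ite (mem_range.mp hk)]]
        simp [hm]

end IsPrimitiveRoot

end

theorem molien_sum_S2_general
    (n : ℕ) (ε : ℂ) (hε : IsPrimitiveRoot ε (2 * n))
    (t : ℂ) (ht : t ^ (2 * n) ≠ 1) (ht4 : t ^ 4 ≠ 1) :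
    ∑ i ∈ Finset.range (2 * n),
        1 / ((1 + ε ^ i * t) * (1 - ε ^ (-(i : ℤ)) * t)) =
      2 * n * (1 - t ^ (4 * n)) * (1 - t ^ 2) / ((1 - t ^ (2 * n)) ^ 2 * (1 - t ^ 4)) := by
  have hn : 2 * n ≠ 0 := fun h => ht (by rw [h, pow_zero])
  have hneg : (-t) ^ (2 * n) = t ^ (2 * n) := (even_two_mul n).neg_pow t
  have ht2 : 1 + t ^ 2 ≠ 0 := fun h => ht4 (by linear_combination (t ^ 2 - 1) * h)
  have hterm (i : ℕ) : 1 / ((1 + ε ^ i * t) * (1 - ε ^ (-(i : ℤ)) * t)) =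
      (1 / (1 - ε ^ i * -t) + 1 / (1 - ε⁻¹ ^ i * t) - 1) / (1 + t ^ 2) := by
    have hprod : ε ^ i * -t * (ε⁻¹ ^ i * t) = -t ^ 2 := by
      rw [inv_pow]; field_simp [hε.ne_zero hn]
    rw [zpow_neg, zpow_natCast, ← inv_pow, ← sub_neg_eq_add, ← mul_neg,
      one_div_one_sub_mul_one_sub (one_sub_pow_mul_ne_zero hε.pow_eq_one (hneg ▸ ht) i)
        (one_sub_pow_mul_ne_zero hε.inv.pow_eq_one ht i) (by rwa [hprod, sub_neg_eq_add]),
      hprod, sub_neg_eq_add]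
  rw [sum_congr rfl fun i _ => hterm i, ← sum_div, sum_sub_distrib, sum_add_distrib,
    hε.sum_one_div_one_sub_pow_mul (hneg ▸ ht), hε.inv.sum_one_div_one_sub_pow_mul ht, hneg,
    sum_const, card_range, nsmul_one]
  have htn : 1 - t ^ (2 * n) ≠ 0 := sub_ne_zero.mpr (Ne.symm ht)
  have ht4' : 1 - t ^ 4 ≠ 0 := sub_ne_zero.mpr (Ne.symm ht4)
  rw [show t ^ (4 * n) = (t ^ (2 * n)) ^ 2 by ring]
  push_cast
  field_simp
  ring

/-- The sum `S₂` in the proof of Example 8.3: for `ε` a primitive `2n`-th root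
of unity and `t^{2n} ≠ 1`, `t⁴ ≠ 1`,
`∑_{i=0}^{2n-1} 1/((1 + εⁱt)(1 - ε⁻ⁱt)) = 2n(1 - t^{4n})(1 - t²)/((1 - t^{2n})²(1 - t⁴))`. -/
theorem molien_sum_S2
    (n : ℕ) (hn : 1 ≤ n) (ε : ℂ) (hε : IsPrimitiveRoot ε (2 * n))
    (t : ℂ) (ht : t ^ (2 * n) ≠ 1) (ht4 : t ^ 4 ≠ 1) :
    ∑ i ∈ Finset.range (2 * n),
        1 / ((1 + ε ^ i * t) * (1 - ε ^ (-(i : ℤ)) * t)) =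
      2 * n * (1 - t ^ (4 * n)) * (1 - t ^ 2) / ((1 - t ^ (2 * n)) ^ 2 * (1 - t ^ 4)) :=
  molien_sum_S2_general n ε hε t ht ht4
end

section
/- Let n ≥ 1 be an integer and ε ∈ ℂ a primitive 2n-th root of unity. Let σ and τ be the ℂ-algebra automorphisms of the polynomial ring ℂ[t₁,t₂] determined by σ(t₁) = −t₁, σ(t₂) = t₂ and τ(t₁) = ε·t₁, τ(t₂) = ε⁻¹·t₂. Then the set of polynomials fixed by both σ and τ is exactly the ℂ-subalgebra of ℂ[t₁,t₂] generated by t₁^{2n}, t₂^{2n}, and t₁²t₂². -/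
/-!
Both automorphisms act diagonally on monomials: `σ` scales `t₁^a t₂^b` by `(-1)^a` and `τ` by
`ε^a ε⁻¹^b`. Hence a polynomial is invariant iff each monomial in its support is, i.e. iff `a`
is even and `a ≡ b [MOD 2n]`; such a monomial is `(t₁²t₂²)^(min a b / 2)` times a power of
`t₁^{2n}` or of `t₂^{2n}`.
-/

open MvPolynomial

namespace MvPolynomial

variable {R σ : Type*}

section CommSemiring

variable [CommSemiring R]

theorem aeval_C_mul_X_monomial (s : σ → R) (d : σ →₀ ℕ) (c : R) :
    aeval (fun i => C (s i) * X i) (monomial d c) =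
      monomial d ((d.prod fun i k => s i ^ k) * c) := by
  rw [aeval_monomial, monomial_eq, C_mul, map_finsuppProd]
  simp only [algebraMap_eq, mul_pow, Finsupp.prod_mul, map_pow]
  ring

theorem coeff_aeval_C_mul_X (s : σ → R) (p : MvPolynomial σ R) (d : σ →₀ ℕ) :
    coeff d (aeval (fun i => C (s i) * X i) p) = (d.prod fun i k => s i ^ k) * coeff d p := by
  classical
  induction p using MvPolynomial.induction_on' with
  | monomial e c =>
    rw [aeval_C_mul_X_monomial, coeff_monomial, coeff_monomial]
    split_ifs with hed
    · rw [hed]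
    · rw [mul_zero]
  | add p q hp hq => rw [map_add, coeff_add, coeff_add, hp, hq, mul_add]

theorem mem_of_forall_monomial_one_mem {S : Subalgebra R (MvPolynomial σ R)}
    {p : MvPolynomial σ R} (h : ∀ d ∈ p.support, monomial d 1 ∈ S) : p ∈ S := by
  rw [p.as_sum]
  refine S.sum_mem fun d hd => ?_
  simpa only [smul_monomial, smul_eq_mul, mul_one] using S.smul_mem (h d hd) (coeff d p)

end CommSemiring

theorem aeval_C_mul_X_eq_self_iff [CommRing R] [NoZeroDivisors R] (s : σ → R)
    (p : MvPolynomial σ R) :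
    aeval (fun i => C (s i) * X i) p = p ↔
      ∀ d ∈ p.support, (d.prod fun i k => s i ^ k) = 1 := by
  simp only [MvPolynomial.ext_iff, coeff_aeval_C_mul_X, mem_support_iff]
  refine forall_congr' fun d => ⟨fun h hd => mul_right_cancel₀ hd (h.trans (one_mul _).symm),
    fun h => ?_⟩
  by_cases hd : coeff d p = 0
  · rw [hd, mul_zero]
  · rw [h hd, one_mul]

end MvPolynomial

theorem IsPrimitiveRoot.modEq_of_pow_mul_inv_pow_eq_one {G₀ : Type*} [CommGroupWithZero G₀]
    {ζ : G₀} {k a b : ℕ} (h : IsPrimitiveRoot ζ k) (hk : k ≠ 0)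
    (hab : ζ ^ a * ζ⁻¹ ^ b = 1) :
    a ≡ b [MOD k] := by
  rw [← zpow_natCast, ← zpow_natCast, inv_zpow', ← zpow_add₀ (h.ne_zero hk),
    h.zpow_eq_one_iff_dvd] at hab
  rw [Nat.modEq_iff_dvd, ← dvd_neg, neg_sub, sub_eq_add_neg]
  exact hab

theorem pow_mul_pow_mem_of_modEq {M A : Type*} [CommMonoid M] [SetLike A M] [SubmonoidClass A M]
    {S : A} {x y : M} {N e a b : ℕ} (hx : x ^ N ∈ S) (hy : y ^ N ∈ S) (hxy : (x * y) ^ e ∈ S)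
    (ha : e ∣ a) (hb : e ∣ b) (hab : a ≡ b [MOD N]) : x ^ a * y ^ b ∈ S := by
  wlog hba : b ≤ a generalizing x y a b
  · rw [mul_comm]
    exact this hy hx (mul_comm x y ▸ hxy) hb ha hab.symm (le_of_not_ge hba)
  obtain ⟨k, hk⟩ := (Nat.modEq_iff_dvd' hba).mp hab.symm
  obtain ⟨m, rfl⟩ := hb
  have hsplit : x ^ a * y ^ (e * m) = (x ^ N) ^ k * ((x * y) ^ e) ^ m := by
    rw [show a = e * m + N * k by omega, pow_add, pow_mul, pow_mul, pow_mul, mul_pow, mul_pow]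
    ac_rfl
  rw [hsplit]
  exact mul_mem (pow_mem hx k) (pow_mem hxy m)

theorem X_zero_pow_mul_X_one_pow_mem_adjoin {R : Type*} [CommSemiring R] {n a b : ℕ}
    (ha : Even a) (hab : a ≡ b [MOD 2 * n]) :
    (X 0 : MvPolynomial (Fin 2) R) ^ a * X 1 ^ b ∈
      Algebra.adjoin R {X 0 ^ (2 * n), X 1 ^ (2 * n), X 0 ^ 2 * X 1 ^ 2} := by
  refine pow_mul_pow_mem_of_modEq (Algebra.subset_adjoin (by simp))
    (Algebra.subset_adjoin (by simp)) ?_ ha.two_dvd ?_ hab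
  · rw [mul_pow]
    exact Algebra.subset_adjoin (by simp)
  · exact (hab.dvd_iff (dvd_mul_right 2 n)).mp ha.two_dvd

theorem adjoin_le_equalizer_inf_equalizer {K : Type*} [Field K] {n : ℕ} {ε : K}
    (hε : ε ^ (2 * n) = 1) (hε0 : ε ≠ 0)
    (σ τ : MvPolynomial (Fin 2) K →ₐ[K] MvPolynomial (Fin 2) K)
    (hσ0 : σ (X 0) = -X 0) (hσ1 : σ (X 1) = X 1)
    (hτ0 : τ (X 0) = C ε * X 0) (hτ1 : τ (X 1) = C ε⁻¹ * X 1) :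
    Algebra.adjoin K {X 0 ^ (2 * n), X 1 ^ (2 * n), X 0 ^ 2 * X 1 ^ 2} ≤
      AlgHom.equalizer σ (AlgHom.id K _) ⊓ AlgHom.equalizer τ (AlgHom.id K _) := by
  have hCε : (C ε : MvPolynomial (Fin 2) K) ^ (2 * n) = 1 := by
    rw [← C_pow, hε, C_1]
  have hCε' : (C ε⁻¹ : MvPolynomial (Fin 2) K) ^ (2 * n) = 1 := by
    rw [← C_pow, inv_pow, hε, inv_one, C_1]
  have hεε : (C ε : MvPolynomial (Fin 2) K) * C ε⁻¹ = 1 := by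
    rw [← C_mul, mul_inv_cancel₀ hε0, C_1]
  refine Algebra.adjoin_le ?_
  simp only [Set.insert_subset_iff, Set.singleton_subset_iff, SetLike.mem_coe,
    Algebra.mem_inf, AlgHom.mem_equalizer, AlgHom.id_apply, map_mul, map_pow, hσ0, hσ1,
    hτ0, hτ1, (even_two_mul n).neg_pow, even_two.neg_pow]
  refine ⟨⟨trivial, ?_⟩, ⟨trivial, ?_⟩, trivial, ?_⟩
  · rw [mul_pow, hCε, one_mul]
  · rw [mul_pow, hCε', one_mul]
  · linear_combination (X 0 ^ 2 * X 1 ^ 2 * (C ε * C ε⁻¹ + 1)) * hεε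

/-- Case (A_{n,2}) of Section 3 / Example 8.3: the ring of invariants of
`ℂ[t₁,t₂]` under the group generated by `σ : t₁ ↦ -t₁, t₂ ↦ t₂` and
`τ : t₁ ↦ ε t₁, t₂ ↦ ε⁻¹ t₂` (`ε` a primitive `2n`-th root of unity) is the
subalgebra generated by `t₁^{2n}`, `t₂^{2n}`, `t₁²t₂²`. -/
theorem invariants_Q2_polynomial_ring
    (n : ℕ) (hn : 1 ≤ n) (ε : ℂ) (hε : IsPrimitiveRoot ε (2 * n))
    (σ τ : MvPolynomial (Fin 2) ℂ →ₐ[ℂ] MvPolynomial (Fin 2) ℂ)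
    (hσ0 : σ (X 0) = -X 0) (hσ1 : σ (X 1) = X 1)
    (hτ0 : τ (X 0) = C ε * X 0) (hτ1 : τ (X 1) = C ε⁻¹ * X 1) :
    {p : MvPolynomial (Fin 2) ℂ | σ p = p ∧ τ p = p} =
      (Algebra.adjoin ℂ
        {(X 0 : MvPolynomial (Fin 2) ℂ) ^ (2 * n), (X 1 : MvPolynomial (Fin 2) ℂ) ^ (2 * n),
          (X 0 : MvPolynomial (Fin 2) ℂ) ^ 2 * (X 1 : MvPolynomial (Fin 2) ℂ) ^ 2} :
        Subalgebra ℂ (MvPolynomial (Fin 2) ℂ)) := by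
  have h2n : 2 * n ≠ 0 := by omega
  have hσ : σ = aeval fun i => C (![-1, 1] i) * X i := by
    ext i; fin_cases i <;> simp [hσ0, hσ1]
  have hτ : τ = aeval fun i => C (![ε, ε⁻¹] i) * X i := by
    ext i; fin_cases i <;> simp [hτ0, hτ1]
  ext p
  refine ⟨fun ⟨hσp, hτp⟩ => mem_of_forall_monomial_one_mem fun d hd => ?_, fun hp =>
    adjoin_le_equalizer_inf_equalizer hε.pow_eq_one (hε.ne_zero h2n) σ τ
      hσ0 hσ1 hτ0 hτ1 hp⟩
  have hsign := (aeval_C_mul_X_eq_self_iff _ p).mp (hσ ▸ hσp) d hd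
  have hrot := (aeval_C_mul_X_eq_self_iff _ p).mp (hτ ▸ hτp) d hd
  simp only [Finsupp.prod_pow, Fin.prod_univ_two, Matrix.cons_val_zero, Matrix.cons_val_one,
    one_pow, mul_one] at hsign hrot
  rw [monomial_eq, C_1, one_mul, Finsupp.prod_pow, Fin.prod_univ_two]
  exact X_zero_pow_mul_X_one_pow_mem_adjoin ((neg_one_pow_eq_one_iff_even (by norm_num)).mp hsign)
    (hε.modEq_of_pow_mul_inv_pow_eq_one h2n hrot)
end

section
/- Let k be an algebraically closed field of characteristic zero and let O ≤ GL₂(k) be the subgroup of invertible diagonal matrices. Let H be a finite subgroup of O such that either H ⊆ SL₂(k), or every element of H has determinant 1 or −1 with some element of determinant −1. Then there exist P ∈ GL₂(k) and a positive integer n such that P·H·P⁻¹ is one of: (1) the cyclic group generated by c_ε with ε a primitive n-th root of unity; (2) the group generated by d₁ and c_ε with ε a primitive 2n-th root of unity; (3) the group generated by d₁ and c_ε with ε a primitive n-th root of unity and n odd; (4) the cyclic group generated by c_{ε,−} with ε a primitive 4n-th root of unity. -/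
/-!
The two diagonal entries are characters `χ, ψ` of `H` with `det = χ ψ`, and `χ` is injective on
the determinant-one part `K` of `H`, so `K` is cyclic, generated by some `diag(ε, ε⁻¹)`. If `H`
contains `d₁ = diag(-1, 1)` (or `diag(1, -1)`, which conjugation by the swap matrix turns into
`d₁`), then `H = K ∪ d₁ K`, which is `Q₂` or `Q₃` according to the parity of `|K|`. Otherwise `χ`
is injective on all of `H`, so `H` is cyclic, generated by some `diag(ε, -ε⁻¹)`; its order is
divisible by `4`, because `H` avoids `d₁`, and then `-ε` is a primitive root of that order:
`H = Q₄`.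
-/

open Matrix

section CyclicPrimitive

variable {G R : Type*} [Group G] [CommRing R] [IsDomain R]

theorem Subgroup.exists_eq_closure_singleton_isPrimitiveRoot_of_injective {H : Subgroup G}
    [Finite H] {f : H →* R} (hf : Function.Injective f) :
    ∃ g : H, H = Subgroup.closure {(g : G)} ∧ IsPrimitiveRoot (f g) (orderOf g) := by
  obtain ⟨g, hg⟩ := H.isCyclic_iff_exists_zpowers_eq_top.1 (isCyclic_of_injective_ringHom f hf)
  refine ⟨⟨g, hg ▸ Subgroup.mem_zpowers g⟩, ?_, orderOf_injective f hf _ ▸ .orderOf _⟩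
  rw [← Subgroup.zpowers_eq_closure, hg]

theorem IsPrimitiveRoot.neg_of_four_mul {ζ : R} {m : ℕ} (hm : 0 < m)
    (h : IsPrimitiveRoot ζ (4 * m)) : IsPrimitiveRoot (-ζ) (4 * m) := by
  have hsq : ζ ^ (2 * m) = -1 :=
    (h.pow (by omega) (by ring : 4 * m = 2 * m * 2)).eq_neg_one_of_two_right
  have hcop : Nat.Coprime (2 * m + 1) (4 * m) := by
    rw [show 4 * m = 2 * (2 * m) by ring]
    exact Nat.Coprime.mul_right (by simp) (by simp)
  simpa [pow_succ, hsq] using h.pow_of_coprime _ hcop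

end CyclicPrimitive

theorem Subgroup.eq_closure_pair_of_mem_or_mul_mem {G : Type*} [Group G] {H : Subgroup G}
    {d c : G} (hd : d ∈ H) (hc : c ∈ H)
    (h : ∀ x ∈ H, x ∈ Subgroup.closure {c} ∨ d * x ∈ Subgroup.closure {c}) :
    H = Subgroup.closure {d, c} := by
  have hcd : Subgroup.closure {c} ≤ Subgroup.closure {d, c} := Subgroup.closure_mono (by simp)
  have hd' : d ∈ Subgroup.closure {d, c} := Subgroup.subset_closure (by simp)
  refine le_antisymm (fun x hx => ?_)
    ((Subgroup.closure_le _).2 (by simp [Set.insert_subset_iff, hd, hc]))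
  rcases h x hx with hx | hx
  · exact hcd hx
  · simpa using mul_mem (inv_mem hd') (hcd hx)

namespace Matrix.GeneralLinearGroup

section Det

variable {n R : Type*} [Fintype n] [DecidableEq n] [CommRing R]

theorem mem_ker_det_iff {g : GL n R} : g ∈ det.ker ↔ (g : Matrix n n R).det = 1 := by
  rw [MonoidHom.mem_ker, Units.ext_iff, val_det_apply, Units.val_one]

theorem det_conj (P g : GL n R) :
    ((MulAut.conj P g : GL n R) : Matrix n n R).det = (g : Matrix n n R).det := by
  rw [← val_det_apply, ← val_det_apply, MulAut.conj_apply, map_mul, map_mul, map_inv,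
    mul_inv_cancel_comm]

end Det

variable {k : Type*} [Field k]

local notation "M₂" => Matrix (Fin 2) (Fin 2) k

variable (k) in
def diagonalSubgroup : Subgroup (GL (Fin 2) k) where
  carrier := {g | (g : M₂) 0 1 = 0 ∧ (g : M₂) 1 0 = 0}
  one_mem' := by simp
  mul_mem' hg hh := by simp_all [Matrix.mul_apply, Fin.sum_univ_two]
  inv_mem' hg := by simp_all [Matrix.coe_units_inv, Matrix.inv_def, Matrix.adjugate_fin_two]

variable {g : GL (Fin 2) k}

theorem mem_diagonalSubgroup : g ∈ diagonalSubgroup k ↔ (g : M₂) 0 1 = 0 ∧ (g : M₂) 1 0 = 0 :=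
  Iff.rfl

theorem coe_eq_of_mem_diagonalSubgroup (hg : g ∈ diagonalSubgroup k) :
    (g : M₂) = !![(g : M₂) 0 0, 0; 0, (g : M₂) 1 1] := by
  ext i j
  fin_cases i <;> fin_cases j <;> simp [hg.1, hg.2]

theorem det_of_mem_diagonalSubgroup (hg : g ∈ diagonalSubgroup k) :
    (g : M₂).det = (g : M₂) 0 0 * (g : M₂) 1 1 := by
  rw [coe_eq_of_mem_diagonalSubgroup hg]
  simp

theorem coe_eq_of_mem_diagonalSubgroup_of_det_eq_one (hg : g ∈ diagonalSubgroup k)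
    (hdet : (g : M₂).det = 1) : (g : M₂) = !![(g : M₂) 0 0, 0; 0, ((g : M₂) 0 0)⁻¹] := by
  rw [det_of_mem_diagonalSubgroup hg] at hdet
  rw [← eq_inv_of_mul_eq_one_right hdet]
  exact coe_eq_of_mem_diagonalSubgroup hg

def diagEntry (i : Fin 2) : diagonalSubgroup k →* k where
  toFun g := ((g : GL (Fin 2) k) : M₂) i i
  map_one' := by simp
  map_mul' g h := by
    simp only [Subgroup.coe_mul, Units.val_mul]
    rw [coe_eq_of_mem_diagonalSubgroup g.2, coe_eq_of_mem_diagonalSubgroup h.2]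
    fin_cases i <;> simp

theorem coe_conj_swap (hg : g ∈ diagonalSubgroup k) :
    ((MulAut.conj (swap k 0 1) g : GL (Fin 2) k) : M₂) = !![(g : M₂) 1 1, 0; 0, (g : M₂) 0 0] := by
  have hval : ((swap k 0 1 : GL (Fin 2) k) : M₂) = Matrix.swap k 0 1 := rfl
  have hinv : (((swap k 0 1)⁻¹ : GL (Fin 2) k) : M₂) = Matrix.swap k 0 1 := rfl
  rw [MulAut.conj_apply, Units.val_mul, Units.val_mul, hinv, hval]
  ext i j
  fin_cases i <;> fin_cases j <;> simp [hg.1, hg.2]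

theorem map_conj_swap_le {H : Subgroup (GL (Fin 2) k)} (hO : H ≤ diagonalSubgroup k) :
    H.map (MulAut.conj (swap k 0 1)).toMonoidHom ≤ diagonalSubgroup k := by
  rintro _ ⟨g, hg, rfl⟩
  rw [MulEquiv.coe_toMonoidHom, mem_diagonalSubgroup, coe_conj_swap (hO hg)]
  simp

/-- `IsQᵢ n H`: `H` is the group `(i)` of the theorem for the parameter `n`. -/
def IsQ₁ (n : ℕ) (H : Subgroup (GL (Fin 2) k)) : Prop :=
  ∃ ε : k, IsPrimitiveRoot ε n ∧
    ∃ cε : GL (Fin 2) k, (cε : M₂) = !![ε, 0; 0, ε⁻¹] ∧ H = Subgroup.closure {cε}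

def IsQ₂ (n : ℕ) (H : Subgroup (GL (Fin 2) k)) : Prop :=
  ∃ ε : k, IsPrimitiveRoot ε (2 * n) ∧
    ∃ d₁ cε : GL (Fin 2) k, (d₁ : M₂) = !![-1, 0; 0, 1] ∧ (cε : M₂) = !![ε, 0; 0, ε⁻¹] ∧
      H = Subgroup.closure {d₁, cε}

def IsQ₃ (n : ℕ) (H : Subgroup (GL (Fin 2) k)) : Prop :=
  Odd n ∧ ∃ ε : k, IsPrimitiveRoot ε n ∧
    ∃ d₁ cε : GL (Fin 2) k, (d₁ : M₂) = !![-1, 0; 0, 1] ∧ (cε : M₂) = !![ε, 0; 0, ε⁻¹] ∧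
      H = Subgroup.closure {d₁, cε}

def IsQ₄ (n : ℕ) (H : Subgroup (GL (Fin 2) k)) : Prop :=
  ∃ ε : k, IsPrimitiveRoot ε (4 * n) ∧
    ∃ cm : GL (Fin 2) k, (cm : M₂) = !![-ε, 0; 0, ε⁻¹] ∧ H = Subgroup.closure {cm}

variable {H : Subgroup (GL (Fin 2) k)} [Finite H]

theorem exists_isQ₁_of_det_eq_one (hO : H ≤ diagonalSubgroup k)
    (hdet : ∀ g ∈ H, (g : M₂).det = 1) : ∃ n, 0 < n ∧ IsQ₁ n H := by
  have hcoe (x : H) := coe_eq_of_mem_diagonalSubgroup_of_det_eq_one (hO x.2) (hdet x x.2)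
  let χ := (diagEntry 0).comp (Subgroup.inclusion hO)
  have hinj : Function.Injective χ := fun x y h =>
    Subtype.ext (Units.ext (by rw [hcoe x, hcoe y]; exact congrArg (fun a => !![a, 0; 0, a⁻¹]) h))
  obtain ⟨c, hH, hc⟩ := Subgroup.exists_eq_closure_singleton_isPrimitiveRoot_of_injective hinj
  exact ⟨orderOf c, orderOf_pos c, χ c, hc, c, hcoe c, hH⟩

theorem exists_isQ₂_or_isQ₃_of_mem (hO : H ≤ diagonalSubgroup k)
    (hpm : ∀ g ∈ H, (g : M₂).det = 1 ∨ (g : M₂).det = -1)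
    {d : GL (Fin 2) k} (hd : d ∈ H) (hd₁ : (d : M₂) = !![-1, 0; 0, 1]) :
    ∃ n, 0 < n ∧ (IsQ₂ n H ∨ IsQ₃ n H) := by
  let K := H ⊓ det.ker
  have : Finite K := Finite.of_injective _ (Subgroup.inclusion_injective inf_le_left)
  obtain ⟨n, hn, ε, hε, c, hc, hK⟩ := exists_isQ₁_of_det_eq_one (H := K) (inf_le_left.trans hO)
    fun g hg => mem_ker_det_iff.1 hg.2
  have hcK : c ∈ K := hK ▸ Subgroup.subset_closure rfl
  have hH : H = Subgroup.closure {d, c} := by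
    refine Subgroup.eq_closure_pair_of_mem_or_mul_mem hd hcK.1 fun x hx => ?_
    rw [← hK]
    refine (hpm x hx).imp (fun h => ⟨hx, mem_ker_det_iff.2 h⟩)
      fun h => ⟨mul_mem hd hx, mem_ker_det_iff.2 ?_⟩
    rw [Units.val_mul, det_mul, hd₁, h]
    simp
  rcases Nat.even_or_odd n with ⟨m, rfl⟩ | hodd
  · exact ⟨m, by omega, Or.inl ⟨ε, by rwa [two_mul], d, c, hd₁, hc, hH⟩⟩
  · exact ⟨n, hn, Or.inr ⟨hodd, ε, hε, d, c, hd₁, hc, hH⟩⟩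

theorem exists_isQ₂_or_isQ₃_map_swap_of_mem (hO : H ≤ diagonalSubgroup k)
    (hpm : ∀ g ∈ H, (g : M₂).det = 1 ∨ (g : M₂).det = -1)
    {d : GL (Fin 2) k} (hd : d ∈ H) (hd₂ : (d : M₂) = !![1, 0; 0, -1]) :
    ∃ n, 0 < n ∧ (IsQ₂ n (H.map (MulAut.conj (swap k 0 1)).toMonoidHom) ∨
      IsQ₃ n (H.map (MulAut.conj (swap k 0 1)).toMonoidHom)) := by
  have := Finite.of_surjective _ ((MulAut.conj (swap k 0 1)).toMonoidHom.subgroupMap_surjective H)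
  refine exists_isQ₂_or_isQ₃_of_mem (map_conj_swap_le hO) ?_ (Subgroup.mem_map_of_mem _ hd)
    (by rw [MulEquiv.coe_toMonoidHom, coe_conj_swap (hO hd), hd₂]; simp)
  rintro _ ⟨g, hg, rfl⟩
  rw [MulEquiv.coe_toMonoidHom, det_conj]
  exact hpm g hg

theorem exists_isQ₄_of_forall_ne (hO : H ≤ diagonalSubgroup k) (hk : ringChar k ≠ 2)
    (hpm : ∀ g ∈ H, (g : M₂).det = 1 ∨ (g : M₂).det = -1)
    (hneg : ∃ g ∈ H, (g : M₂).det = -1)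
    (h₁ : ∀ d ∈ H, (d : M₂) ≠ !![-1, 0; 0, 1]) (h₂ : ∀ d ∈ H, (d : M₂) ≠ !![1, 0; 0, -1]) :
    ∃ n, 0 < n ∧ IsQ₄ n H := by
  have hk' : (-1 : k) ≠ 1 := Ring.neg_one_ne_one_of_char_ne_two hk
  let χ := (diagEntry 0).comp (Subgroup.inclusion hO)
  let ψ := (diagEntry 1).comp (Subgroup.inclusion hO)
  have hcoe (x : H) : ((x : GL (Fin 2) k) : M₂) = !![χ x, 0; 0, ψ x] :=
    coe_eq_of_mem_diagonalSubgroup (hO x.2)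
  have hdet (x : H) : ((x : GL (Fin 2) k) : M₂).det = χ x * ψ x :=
    det_of_mem_diagonalSubgroup (hO x.2)
  have hinj : Function.Injective χ := by
    refine (injective_iff_map_eq_one χ).2 fun x hx => ?_
    rcases hpm x x.2 with h | h <;> rw [hdet, hx, one_mul] at h
    · exact Subtype.ext (Units.ext (by rw [hcoe, hx, h]; simp [← one_fin_two]))
    · exact absurd (by rw [hcoe, hx, h]) (h₂ x x.2)
  obtain ⟨c, hH, hc⟩ := Subgroup.exists_eq_closure_singleton_isPrimitiveRoot_of_injective hinj
  have hN : 0 < orderOf c := orderOf_pos c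
  have hdetc : χ c * ψ c = -1 := by
    rw [← hdet]
    refine (hpm c c.2).resolve_left fun h => ?_
    obtain ⟨g, hg, hg'⟩ := hneg
    have hker : H ≤ det.ker :=
      hH ▸ (Subgroup.closure_le _).2 (Set.singleton_subset_iff.2 (mem_ker_det_iff.2 h))
    exact hk' (hg' ▸ mem_ker_det_iff.1 (hker hg))
  have hψc : ψ c = -(χ c)⁻¹ := by
    rw [neg_inv, inv_eq_of_mul_eq_one_right (by rw [neg_mul, hdetc, neg_neg])]
  have heven : Even (orderOf c) := by
    rw [← neg_one_pow_eq_one_iff_even hk']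
    have := congrArg ψ (pow_orderOf_eq_one c)
    rwa [map_pow, map_one, hψc, neg_pow, inv_pow, hc.pow_eq_one, inv_one, mul_one] at this
  obtain ⟨M, hM⟩ := heven
  have hMeven : Even M := by
    by_contra hodd
    rw [Nat.not_even_iff_odd] at hodd
    have hχM : χ c ^ M = -1 := (hc.pow hN (by omega : orderOf c = M * 2)).eq_neg_one_of_two_right
    apply h₁ _ (c ^ M).2
    rw [hcoe, map_pow, map_pow, hψc, neg_pow, inv_pow, hχM, hodd.neg_one_pow]
    norm_num
  obtain ⟨m, rfl⟩ := hMeven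
  refine ⟨m, by omega, -χ c, ?_, c, ?_, hH⟩
  · exact IsPrimitiveRoot.neg_of_four_mul (by omega) (by rwa [show 4 * m = orderOf c by omega])
  · rw [hcoe, hψc, neg_neg, inv_neg]

end Matrix.GeneralLinearGroup

open Matrix.GeneralLinearGroup in
theorem finite_diagonal_subgroups_general
    {k : Type*} [Field k] [CharZero k]
    (H : Subgroup (GL (Fin 2) k)) [Finite H]
    (hdiag : ∀ g ∈ H, ((g : GL (Fin 2) k) : Matrix (Fin 2) (Fin 2) k) 0 1 = 0 ∧
        ((g : GL (Fin 2) k) : Matrix (Fin 2) (Fin 2) k) 1 0 = 0)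
    (hdet : (∀ g ∈ H, ((g : GL (Fin 2) k) : Matrix (Fin 2) (Fin 2) k).det = 1) ∨
      ((∀ g ∈ H, ((g : GL (Fin 2) k) : Matrix (Fin 2) (Fin 2) k).det = 1 ∨
          ((g : GL (Fin 2) k) : Matrix (Fin 2) (Fin 2) k).det = -1) ∧
        ∃ g ∈ H, ((g : GL (Fin 2) k) : Matrix (Fin 2) (Fin 2) k).det = -1)) :
    ∃ P : GL (Fin 2) k, ∃ n : ℕ, 0 < n ∧
      ((∃ ε : k, IsPrimitiveRoot ε n ∧
          ∃ cε : GL (Fin 2) k, (cε : Matrix (Fin 2) (Fin 2) k) = !![ε, 0; 0, ε⁻¹] ∧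
            Subgroup.map (MulAut.conj P).toMonoidHom H = Subgroup.closure {cε}) ∨
       (∃ ε : k, IsPrimitiveRoot ε (2 * n) ∧
          ∃ d₁ cε : GL (Fin 2) k, (d₁ : Matrix (Fin 2) (Fin 2) k) = !![-1, 0; 0, 1] ∧
            (cε : Matrix (Fin 2) (Fin 2) k) = !![ε, 0; 0, ε⁻¹] ∧
            Subgroup.map (MulAut.conj P).toMonoidHom H = Subgroup.closure {d₁, cε}) ∨
       (Odd n ∧ ∃ ε : k, IsPrimitiveRoot ε n ∧
          ∃ d₁ cε : GL (Fin 2) k, (d₁ : Matrix (Fin 2) (Fin 2) k) = !![-1, 0; 0, 1] ∧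
            (cε : Matrix (Fin 2) (Fin 2) k) = !![ε, 0; 0, ε⁻¹] ∧
            Subgroup.map (MulAut.conj P).toMonoidHom H = Subgroup.closure {d₁, cε}) ∨
       (∃ ε : k, IsPrimitiveRoot ε (4 * n) ∧
          ∃ cm : GL (Fin 2) k, (cm : Matrix (Fin 2) (Fin 2) k) = !![-ε, 0; 0, ε⁻¹] ∧
            Subgroup.map (MulAut.conj P).toMonoidHom H = Subgroup.closure {cm})) := by
  have hO : H ≤ diagonalSubgroup k := hdiag
  have hconj_one : H.map (MulAut.conj (1 : GL (Fin 2) k)).toMonoidHom = H := by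
    rw [map_one]
    exact Subgroup.map_id H
  rcases hdet with hSL | ⟨hpm, hneg⟩
  · obtain ⟨n, hn, hQ⟩ := exists_isQ₁_of_det_eq_one hO hSL
    exact ⟨1, n, hn, by rw [hconj_one]; exact Or.inl hQ⟩
  by_cases h₁ : ∃ d ∈ H, (d : Matrix (Fin 2) (Fin 2) k) = !![-1, 0; 0, 1]
  · obtain ⟨d, hd, hd₁⟩ := h₁
    obtain ⟨n, hn, hQ⟩ := exists_isQ₂_or_isQ₃_of_mem hO hpm hd hd₁
    exact ⟨1, n, hn, by rw [hconj_one]; exact Or.inr (hQ.imp_right Or.inl)⟩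
  by_cases h₂ : ∃ d ∈ H, (d : Matrix (Fin 2) (Fin 2) k) = !![1, 0; 0, -1]
  · obtain ⟨d, hd, hd₂⟩ := h₂
    obtain ⟨n, hn, hQ⟩ := exists_isQ₂_or_isQ₃_map_swap_of_mem hO hpm hd hd₂
    exact ⟨swap k 0 1, n, hn, Or.inr (hQ.imp_right Or.inl)⟩
  push Not at h₁ h₂
  obtain ⟨n, hn, hQ⟩ := exists_isQ₄_of_forall_ne hO (by simp [ringChar.eq_zero]) hpm hneg h₁ h₂
  exact ⟨1, n, hn, by rw [hconj_one]; exact Or.inr (Or.inr (Or.inr hQ))⟩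

/-- Lemma 3.4: a finite subgroup `H` of the diagonal subgroup `O ≤ GL₂(k)`
that is either contained in `SL₂(k)` or has all determinants `±1` with some
determinant `-1` is, up to conjugation, one of the groups `Q₁, Q₂, Q₃, Q₄`. -/
theorem finite_diagonal_subgroups
    {k : Type*} [Field k] [IsAlgClosed k] [CharZero k]
    (H : Subgroup (GL (Fin 2) k)) [Finite H]
    (hdiag : ∀ g ∈ H, ((g : GL (Fin 2) k) : Matrix (Fin 2) (Fin 2) k) 0 1 = 0 ∧
        ((g : GL (Fin 2) k) : Matrix (Fin 2) (Fin 2) k) 1 0 = 0)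
    (hdet : (∀ g ∈ H, ((g : GL (Fin 2) k) : Matrix (Fin 2) (Fin 2) k).det = 1) ∨
      ((∀ g ∈ H, ((g : GL (Fin 2) k) : Matrix (Fin 2) (Fin 2) k).det = 1 ∨
          ((g : GL (Fin 2) k) : Matrix (Fin 2) (Fin 2) k).det = -1) ∧
        ∃ g ∈ H, ((g : GL (Fin 2) k) : Matrix (Fin 2) (Fin 2) k).det = -1)) :
    ∃ P : GL (Fin 2) k, ∃ n : ℕ, 0 < n ∧
      ((∃ ε : k, IsPrimitiveRoot ε n ∧
          ∃ cε : GL (Fin 2) k, (cε : Matrix (Fin 2) (Fin 2) k) = !![ε, 0; 0, ε⁻¹] ∧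
            Subgroup.map (MulAut.conj P).toMonoidHom H = Subgroup.closure {cε}) ∨
       (∃ ε : k, IsPrimitiveRoot ε (2 * n) ∧
          ∃ d₁ cε : GL (Fin 2) k, (d₁ : Matrix (Fin 2) (Fin 2) k) = !![-1, 0; 0, 1] ∧
            (cε : Matrix (Fin 2) (Fin 2) k) = !![ε, 0; 0, ε⁻¹] ∧
            Subgroup.map (MulAut.conj P).toMonoidHom H = Subgroup.closure {d₁, cε}) ∨
       (Odd n ∧ ∃ ε : k, IsPrimitiveRoot ε n ∧
          ∃ d₁ cε : GL (Fin 2) k, (d₁ : Matrix (Fin 2) (Fin 2) k) = !![-1, 0; 0, 1] ∧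
            (cε : Matrix (Fin 2) (Fin 2) k) = !![ε, 0; 0, ε⁻¹] ∧
            Subgroup.map (MulAut.conj P).toMonoidHom H = Subgroup.closure {d₁, cε}) ∨
       (∃ ε : k, IsPrimitiveRoot ε (4 * n) ∧
          ∃ cm : GL (Fin 2) k, (cm : Matrix (Fin 2) (Fin 2) k) = !![-ε, 0; 0, ε⁻¹] ∧
            Subgroup.map (MulAut.conj P).toMonoidHom H = Subgroup.closure {cm})) :=
  finite_diagonal_subgroups_general H hdiag hdet
end
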